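/- arXiv:1906.11692 — 6 statements merged into one kernel-verified Lean document; each statement's English description precedes it below -/
import Mathlib

section
/- Let n ≥ 1, N = 2n+1 and Q = [−1,1)^N. The family {τ_k(Q)}_{k ∈ ℤ^N} of left-translates of the unit cell by even integer points is a tiling of ℝ^N: ⋃_{k ∈ ℤ^N} τ_k(Q) = ℝ^N, and τ_k(Q) ∩ τ_h(Q) = ∅ whenever k, h ∈ ℤ^N with k ≠ h. -/
open MeasureTheory Filter Topology Set

noncomputable section

/-- Points of the `n`-th Heisenberg group, realised as `ℝ^(2n+1)`. -/
abbrev Pt (n : ℕ) : Type := Fin (2*n+1) → ℝ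

/-- The Heisenberg group operation. -/
def Hmul (n : ℕ) (x y : Pt n) : Pt n := fun i =>
  if (i : ℕ) < 2*n then x i + y i
  else x i + y i +
    (∑ j : Fin n,
      (x ⟨(j:ℕ), by have := j.isLt; omega⟩ * y ⟨n + (j:ℕ), by have := j.isLt; omega⟩
        - x ⟨n + (j:ℕ), by have := j.isLt; omega⟩ * y ⟨(j:ℕ), by have := j.isLt; omega⟩)) / 2

/-- The anisotropic Heisenberg dilation `δ_t`. -/
def dil (n : ℕ) (t : ℝ) (x : Pt n) : Pt n := fun i =>
  if (i : ℕ) < 2*n then t * x i else t^2 * x i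

/-- The horizontal vector field `X_i` acting on a function `u`. -/
def XD (n : ℕ) (i : Fin (2*n)) (u : Pt n → ℝ) (x : Pt n) : ℝ :=
  if h : (i : ℕ) < n then
    fderiv ℝ u x (Pi.single (⟨(i:ℕ), by have := i.isLt; omega⟩ : Fin (2*n+1)) 1)
      - x ⟨n + (i:ℕ), by omega⟩ / 2 *
        fderiv ℝ u x (Pi.single (⟨2*n, by omega⟩ : Fin (2*n+1)) 1)
  else
    fderiv ℝ u x (Pi.single (⟨(i:ℕ), by have := i.isLt; omega⟩ : Fin (2*n+1)) 1)
      + x ⟨(i:ℕ) - n, by have := i.isLt; omega⟩ / 2 *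
        fderiv ℝ u x (Pi.single (⟨2*n, by omega⟩ : Fin (2*n+1)) 1)

/-- The horizontal gradient `∇_X u` as an element of Euclidean `ℝ^(2n)`. -/
def hgrad (n : ℕ) (u : Pt n → ℝ) (x : Pt n) : EuclideanSpace ℝ (Fin (2*n)) :=
  (WithLp.equiv 2 (Fin (2*n) → ℝ)).symm (fun i => XD n i u x)

/-- The H-linear function `l_q(x) = q · π_m(x)`. -/
def lin (n : ℕ) (q : EuclideanSpace ℝ (Fin (2*n))) (x : Pt n) : ℝ :=
  ∑ i : Fin (2*n), q i * x ⟨(i:ℕ), by have := i.isLt; omega⟩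

/-- The (semiopen) unit cell `Q = [-1,1)^N`. -/
def Qcell (n : ℕ) : Set (Pt n) := {x | ∀ i, -1 ≤ x i ∧ x i < 1}

/-- Admissible competitors: smooth functions agreeing with `l_q` outside a compact
subset of `A`. -/
def adm (n : ℕ) (A : Set (Pt n)) (q : EuclideanSpace ℝ (Fin (2*n)))
    (u : Pt n → ℝ) : Prop :=
  ∃ v : Pt n → ℝ, ContDiff ℝ (⊤ : ℕ∞) v ∧ HasCompactSupport v ∧ tsupport v ⊆ A ∧
    u = fun x => lin n q x + v x

/-- The minimal energy `μ_q(A)` of the Dirichlet problem with boundary datum `l_q`. -/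
def mu (n : ℕ) (f : Pt n → EuclideanSpace ℝ (Fin (2*n)) → ℝ)
    (A : Set (Pt n)) (q : EuclideanSpace ℝ (Fin (2*n))) : ℝ :=
  sInf {r | ∃ u, adm n A q u ∧ r = ∫ x in A, f x (hgrad n u x)}

/-- The normalised minimal energy on the dilated cell `δ_t(Q)`. -/
def ecell (n : ℕ) (f : Pt n → EuclideanSpace ℝ (Fin (2*n)) → ℝ)
    (q : EuclideanSpace ℝ (Fin (2*n))) (t : ℝ) : ℝ :=
  mu n f (interior (dil n t '' Qcell n)) q / (volume (dil n t '' Qcell n)).toReal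

/-- A set has Lipschitz boundary if near every boundary point it is, in bi-Lipschitz
coordinates, a half space. -/
def HasLipschitzBoundary (n : ℕ) (A : Set (Pt n)) : Prop :=
  ∀ x ∈ frontier A, ∃ (U : Set (Pt n)) (φ ψ : Pt n → Pt n) (K : NNReal),
    IsOpen U ∧ x ∈ U ∧ LipschitzOnWith K φ U ∧ LipschitzOnWith K ψ (φ '' U) ∧
    (∀ y ∈ U, ψ (φ y) = y) ∧
    U ∩ A = {y ∈ U | φ y ⟨2*n, by omega⟩ < 0} ∧
    U ∩ frontier A = {y ∈ U | φ y ⟨2*n, by omega⟩ = 0}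

/-- The regularised minimal energy over globally smooth functions equal to `l_q` on `∂A`. -/
def mreg (n : ℕ) (f : Pt n → EuclideanSpace ℝ (Fin (2*n)) → ℝ)
    (A : Set (Pt n)) (q : EuclideanSpace ℝ (Fin (2*n))) : ℝ :=
  sInf {r | ∃ u : Pt n → ℝ, ContDiff ℝ (⊤ : ℕ∞) u ∧ (∀ x ∈ frontier A, u x = lin n q x) ∧
    r = ∫ x in A, f x (hgrad n u x)}

/-- The Euclidean ball in `ℝ^N`. -/
def ebal (n : ℕ) (x : Pt n) (ρ : ℝ) : Set (Pt n) :=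
  {y | ∑ i, (y i - x i)^2 < ρ^2}

/-- Auxiliary bilinear sum appearing in the Heisenberg product with `2k`. -/
def Ssum (n : ℕ) (k : Fin (2*n+1) → ℤ) (y : Pt n) : ℝ :=
  ∑ j : Fin n,
    ((k ⟨(j:ℕ), by have := j.isLt; omega⟩ : ℝ) * y ⟨n + (j:ℕ), by have := j.isLt; omega⟩
      - (k ⟨n + (j:ℕ), by have := j.isLt; omega⟩ : ℝ) * y ⟨(j:ℕ), by have := j.isLt; omega⟩)

/-- The inverse translate `(2k)⁻¹ * y`. -/
def xky (n : ℕ) (k : Fin (2*n+1) → ℤ) (y : Pt n) : Pt n := fun i =>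
  if (i : ℕ) < 2*n then y i - 2 * (k i : ℝ)
  else y i - 2 * (k i : ℝ) - Ssum n k y

lemma xky_lt (n : ℕ) (k : Fin (2*n+1) → ℤ) (y : Pt n) (i : Fin (2*n+1))
    (h : (i:ℕ) < 2*n) : xky n k y i = y i - 2 * (k i : ℝ) := if_pos h

lemma xky_last (n : ℕ) (k : Fin (2*n+1) → ℤ) (y : Pt n) (i : Fin (2*n+1))
    (h : ¬ (i:ℕ) < 2*n) : xky n k y i = y i - 2 * (k i : ℝ) - Ssum n k y := if_neg h

lemma hmul_sum (n : ℕ) (k : Fin (2*n+1) → ℤ) (x : Pt n) :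
    (∑ j : Fin n,
      (2 * (k ⟨(j:ℕ), by have := j.isLt; omega⟩ : ℝ) * x ⟨n + (j:ℕ), by have := j.isLt; omega⟩
        - 2 * (k ⟨n + (j:ℕ), by have := j.isLt; omega⟩ : ℝ) * x ⟨(j:ℕ), by have := j.isLt; omega⟩))
      = 2 * Ssum n k x := by
  rw [Ssum, Finset.mul_sum]
  exact Finset.sum_congr rfl fun j _ => by ring

lemma ssum_xky (n : ℕ) (k : Fin (2*n+1) → ℤ) (y : Pt n) :
    Ssum n k (xky n k y) = Ssum n k y := by
  unfold Ssum
  refine Finset.sum_congr rfl fun j _ => ?_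
  rw [xky_lt n k y _ (by exact (by omega : n + (j:ℕ) < 2*n)),
      xky_lt n k y _ (by exact (by omega : (j:ℕ) < 2*n))]
  ring

lemma ssum_congr (n : ℕ) (k h : Fin (2*n+1) → ℤ) (y : Pt n)
    (hk : ∀ i : Fin (2*n+1), (i:ℕ) < 2*n → k i = h i) : Ssum n k y = Ssum n h y := by
  unfold Ssum
  refine Finset.sum_congr rfl fun j _ => ?_
  rw [hk _ (by exact (by omega : (j:ℕ) < 2*n)),
      hk _ (by exact (by omega : n + (j:ℕ) < 2*n))]

lemma hmul_xky (n : ℕ) (k : Fin (2*n+1) → ℤ) (y : Pt n) :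
    Hmul n (fun i => 2 * (k i : ℝ)) (xky n k y) = y := by
  funext i
  by_cases hi : (i:ℕ) < 2*n
  · simp only [Hmul, if_pos hi, xky_lt n k y i hi]
    ring
  · simp only [Hmul, if_neg hi]
    rw [hmul_sum, ssum_xky, xky_last n k y i hi]
    ring

lemma mem_translate_iff (n : ℕ) (k : Fin (2*n+1) → ℤ) (y : Pt n) :
    y ∈ Hmul n (fun i => 2 * (k i : ℝ)) '' Qcell n ↔ xky n k y ∈ Qcell n := by
  constructor
  · rintro ⟨x, hx, rfl⟩
    have hx' : xky n k (Hmul n (fun i => 2 * (k i : ℝ)) x) = x := by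
      funext i
      by_cases hi : (i:ℕ) < 2*n
      · rw [xky_lt _ _ _ _ hi]
        simp only [Hmul, if_pos hi]
        ring
      · rw [xky_last _ _ _ _ hi]
        have hss : Ssum n k (Hmul n (fun i => 2 * (k i : ℝ)) x) = Ssum n k x := by
          unfold Ssum
          refine Finset.sum_congr rfl fun j _ => ?_
          have e1 : Hmul n (fun i => 2 * (k i : ℝ)) x
              ⟨n + (j:ℕ), by have := j.isLt; omega⟩
              = 2 * (k ⟨n + (j:ℕ), by have := j.isLt; omega⟩ : ℝ)
                + x ⟨n + (j:ℕ), by have := j.isLt; omega⟩ := by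
            simp only [Hmul, if_pos (by exact (by omega : n + (j:ℕ) < 2*n))]
          have e2 : Hmul n (fun i => 2 * (k i : ℝ)) x
              ⟨(j:ℕ), by have := j.isLt; omega⟩
              = 2 * (k ⟨(j:ℕ), by have := j.isLt; omega⟩ : ℝ)
                + x ⟨(j:ℕ), by have := j.isLt; omega⟩ := by
            simp only [Hmul, if_pos (by exact (by omega : (j:ℕ) < 2*n))]
          rw [e1, e2]
          ring
        rw [hss]
        simp only [Hmul, if_neg hi]
        rw [hmul_sum]
        ring
    rw [hx']
    exact hx
  · intro hx
    exact ⟨xky n k y, hx, hmul_xky n k y⟩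

lemma floor_even_bounds (a : ℝ) :
    -1 ≤ a - 2 * (⌊(a+1)/2⌋ : ℝ) ∧ a - 2 * (⌊(a+1)/2⌋ : ℝ) < 1 := by
  constructor
  · have := Int.floor_le ((a+1)/2)
    linarith
  · have := Int.lt_floor_add_one ((a+1)/2)
    linarith

lemma unique_even {a : ℝ} {m m' : ℤ} (h1 : -1 ≤ a - 2*(m:ℝ)) (h2 : a - 2*(m:ℝ) < 1)
    (h3 : -1 ≤ a - 2*(m':ℝ)) (h4 : a - 2*(m':ℝ) < 1) : m = m' := by
  have h5 : (m:ℝ) < m' + 1 := by linarith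
  have h6 : (m':ℝ) < m + 1 := by linarith
  have h5' : m < m' + 1 := by exact_mod_cast h5
  have h6' : m' < m + 1 := by exact_mod_cast h6
  omega

/-- the left-translates of the unit cell `Q = [-1,1)^N` by even integer
points tile `ℝ^N`. -/
theorem stmt_4 (n : ℕ) (hn : 1 ≤ n) :
    (⋃ k : Fin (2*n+1) → ℤ, Hmul n (fun i => 2 * (k i : ℝ)) '' Qcell n) = Set.univ ∧
    ∀ k h : Fin (2*n+1) → ℤ, k ≠ h →
      Disjoint (Hmul n (fun i => 2 * (k i : ℝ)) '' Qcell n)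
        (Hmul n (fun i => 2 * (h i : ℝ)) '' Qcell n) := by
  constructor
  · ext y
    simp only [Set.mem_iUnion, Set.mem_univ, iff_true]
    classical
    set k0 : Fin (2*n+1) → ℤ := fun i => ⌊(y i + 1)/2⌋ with hk0
    set c : ℝ := y ⟨2*n, by omega⟩ - Ssum n k0 y with hc
    refine ⟨fun i => if (i:ℕ) < 2*n then k0 i else ⌊(c+1)/2⌋, ?_⟩
    rw [mem_translate_iff]
    intro i
    by_cases hi : (i:ℕ) < 2*n
    · rw [xky_lt _ _ _ _ hi]
      simp only [if_pos hi, hk0]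
      exact floor_even_bounds (y i)
    · rw [xky_last _ _ _ _ hi]
      simp only [if_neg hi]
      have hieq : i = ⟨2*n, by omega⟩ := by
        have := i.isLt
        exact Fin.ext (show (i:ℕ) = 2*n by omega)
      have hss : Ssum n (fun i => if (i:ℕ) < 2*n then k0 i else ⌊(c+1)/2⌋) y
          = Ssum n k0 y := by
        refine ssum_congr n _ _ y fun i hi' => ?_
        simp only [if_pos hi']
      rw [hss, hieq]
      have := floor_even_bounds c
      constructor <;> [linarith [this.1]; linarith [this.2]]
  · intro k h hne
    rw [Set.disjoint_left]
    intro y hky hhy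
    rw [mem_translate_iff] at hky hhy
    apply hne
    have heq : ∀ i : Fin (2*n+1), (i:ℕ) < 2*n → k i = h i := by
      intro i hi
      have b1 := hky i
      have b2 := hhy i
      rw [xky_lt _ _ _ _ hi] at b1
      rw [xky_lt _ _ _ _ hi] at b2
      exact unique_even b1.1 b1.2 b2.1 b2.2
    funext i
    by_cases hi : (i:ℕ) < 2*n
    · exact heq i hi
    · have b1 := hky i
      have b2 := hhy i
      rw [xky_last _ _ _ _ hi] at b1
      rw [xky_last _ _ _ _ hi] at b2
      rw [ssum_congr n k h y heq] at b1
      exact unique_even (a := y i - Ssum n h y) (by linarith [b1.1]) (by linarith [b1.2])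
        (by linarith [b2.1]) (by linarith [b2.2])

end
end

section
/- Let n ≥ 1, N = 2n+1, Q = [−1,1)^N and t > 0. Set Q^t = δ_t(Q) and Q^t_k = τ_{δ_t(k)}(Q^t) for k ∈ ℤ^N. Then the family {Q^t_k}_{k ∈ ℤ^N} is a tiling of ℝ^N: ⋃_{k ∈ ℤ^N} Q^t_k = ℝ^N and Q^t_k ∩ Q^t_h = ∅ for all k ≠ h in ℤ^N. -/
open MeasureTheory Filter Topology Set

noncomputable section

namespace S5

/-- The "reduced last coordinate" of `z` relative to `k`. -/
def wv (n : ℕ) (t : ℝ) (k : Fin (2*n+1) → ℤ) (z : Pt n) : ℝ :=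
  z ⟨2*n, by omega⟩ / t^2 -
    (∑ j : Fin n, ((k ⟨(j:ℕ), by have := j.isLt; omega⟩ : ℝ) * z ⟨n + (j:ℕ), by have := j.isLt; omega⟩
      - (k ⟨n + (j:ℕ), by have := j.isLt; omega⟩ : ℝ) * z ⟨(j:ℕ), by have := j.isLt; omega⟩)) / t

lemma apply_lo (n : ℕ) (t : ℝ) (k : Fin (2*n+1) → ℤ) (x : Pt n)
    (i : Fin (2*n+1)) (hi : (i:ℕ) < 2*n) :
    Hmul n (fun i => 2 * dil n t (fun j => (k j : ℝ)) i) (dil n t x) i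
      = 2 * (t * (k i : ℝ)) + t * x i := by
  simp only [Hmul, dil, if_pos hi]

lemma apply_hi (n : ℕ) (t : ℝ) (k : Fin (2*n+1) → ℤ) (x : Pt n) :
    Hmul n (fun i => 2 * dil n t (fun j => (k j : ℝ)) i) (dil n t x) ⟨2*n, by omega⟩
      = 2 * (t^2 * (k ⟨2*n, by omega⟩ : ℝ)) + t^2 * x ⟨2*n, by omega⟩
        + t^2 * ∑ j : Fin n,
            ((k ⟨(j:ℕ), by have := j.isLt; omega⟩ : ℝ) * x ⟨n + (j:ℕ), by have := j.isLt; omega⟩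
              - (k ⟨n + (j:ℕ), by have := j.isLt; omega⟩ : ℝ) * x ⟨(j:ℕ), by have := j.isLt; omega⟩) := by
  have hlast : ¬ ((⟨2*n, by omega⟩ : Fin (2*n+1)) : ℕ) < 2*n := by simp
  simp only [Hmul, dil, if_neg hlast]
  have hsum : (∑ j : Fin n,
      (((2 * if ((j:ℕ)) < 2*n then t * (k ⟨(j:ℕ), by have := j.isLt; omega⟩ : ℝ) else t^2 * (k ⟨(j:ℕ), by have := j.isLt; omega⟩ : ℝ)) *
        (if n + (j:ℕ) < 2*n then t * x ⟨n + (j:ℕ), by have := j.isLt; omega⟩ else t^2 * x ⟨n + (j:ℕ), by have := j.isLt; omega⟩))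
      - (2 * if n + (j:ℕ) < 2*n then t * (k ⟨n + (j:ℕ), by have := j.isLt; omega⟩ : ℝ) else t^2 * (k ⟨n + (j:ℕ), by have := j.isLt; omega⟩ : ℝ)) *
        (if (j:ℕ) < 2*n then t * x ⟨(j:ℕ), by have := j.isLt; omega⟩ else t^2 * x ⟨(j:ℕ), by have := j.isLt; omega⟩))) =
      2 * t^2 * ∑ j : Fin n,
        ((k ⟨(j:ℕ), by have := j.isLt; omega⟩ : ℝ) * x ⟨n + (j:ℕ), by have := j.isLt; omega⟩
          - (k ⟨n + (j:ℕ), by have := j.isLt; omega⟩ : ℝ) * x ⟨(j:ℕ), by have := j.isLt; omega⟩) := by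
    rw [Finset.mul_sum]
    refine Finset.sum_congr rfl fun j _ => ?_
    have h1 : (j:ℕ) < 2*n := by have := j.isLt; omega
    have h2 : n + (j:ℕ) < 2*n := by have := j.isLt; omega
    rw [if_pos h1, if_pos h2, if_pos h1, if_pos h2]
    ring
  rw [hsum]
  ring

end S5

namespace S5

lemma mem_tile_iff (n : ℕ) (t : ℝ) (ht : 0 < t) (k : Fin (2*n+1) → ℤ) (z : Pt n) :
    z ∈ Hmul n (fun i => 2 * dil n t (fun j => (k j : ℝ)) i) '' (dil n t '' Qcell n) ↔
    ((∀ i : Fin (2*n+1), (i:ℕ) < 2*n → (-1 ≤ z i / t - 2*(k i : ℝ) ∧ z i / t - 2*(k i : ℝ) < 1)) ∧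
      (-1 ≤ wv n t k z - 2*(k ⟨2*n, by omega⟩ : ℝ) ∧ wv n t k z - 2*(k ⟨2*n, by omega⟩ : ℝ) < 1)) := by
  have ht' : t ≠ 0 := ne_of_gt ht
  constructor
  · rintro ⟨y, ⟨x, hx, rfl⟩, rfl⟩
    have hcoord : ∀ i : Fin (2*n+1), (i:ℕ) < 2*n →
        Hmul n (fun i => 2 * dil n t (fun j => (k j : ℝ)) i) (dil n t x) i / t - 2*(k i : ℝ) = x i := by
      intro i hi
      rw [apply_lo n t k x i hi]
      field_simp
      ring
    have hsum : (∑ j : Fin n,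
        ((k ⟨(j:ℕ), by have := j.isLt; omega⟩ : ℝ) *
            Hmul n (fun i => 2 * dil n t (fun j => (k j : ℝ)) i) (dil n t x) ⟨n + (j:ℕ), by have := j.isLt; omega⟩
          - (k ⟨n + (j:ℕ), by have := j.isLt; omega⟩ : ℝ) *
            Hmul n (fun i => 2 * dil n t (fun j => (k j : ℝ)) i) (dil n t x) ⟨(j:ℕ), by have := j.isLt; omega⟩)) =
        t * ∑ j : Fin n,
          ((k ⟨(j:ℕ), by have := j.isLt; omega⟩ : ℝ) * x ⟨n + (j:ℕ), by have := j.isLt; omega⟩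
            - (k ⟨n + (j:ℕ), by have := j.isLt; omega⟩ : ℝ) * x ⟨(j:ℕ), by have := j.isLt; omega⟩) := by
      rw [Finset.mul_sum]
      refine Finset.sum_congr rfl fun j _ => ?_
      rw [apply_lo n t k x ⟨n + (j:ℕ), by have := j.isLt; omega⟩
            (show n + (j:ℕ) < 2*n by have := j.isLt; omega),
          apply_lo n t k x ⟨(j:ℕ), by have := j.isLt; omega⟩
            (show (j:ℕ) < 2*n by have := j.isLt; omega)]
      ring
    have hw : wv n t k (Hmul n (fun i => 2 * dil n t (fun j => (k j : ℝ)) i) (dil n t x))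
        - 2*(k ⟨2*n, by omega⟩ : ℝ) = x ⟨2*n, by omega⟩ := by
      unfold wv
      rw [hsum, apply_hi n t k x]
      field_simp
      ring
    refine ⟨fun i hi => ?_, ?_⟩
    · rw [hcoord i hi]; exact hx i
    · rw [hw]; exact hx _
  · rintro ⟨h1, h2⟩
    set x : Pt n := fun i =>
      if h : (i:ℕ) < 2*n then z i / t - 2*(k i : ℝ) else wv n t k z - 2*(k ⟨2*n, by omega⟩ : ℝ) with hxdef
    have hx : x ∈ Qcell n := by
      intro i
      by_cases hi : (i:ℕ) < 2*n
      · simp only [hxdef, dif_pos hi]; exact h1 i hi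
      · simp only [hxdef, dif_neg hi]; exact h2
    refine ⟨dil n t x, ⟨x, hx, rfl⟩, ?_⟩
    funext i
    by_cases hi : (i:ℕ) < 2*n
    · rw [apply_lo n t k x i hi]
      simp only [hxdef, dif_pos hi]
      field_simp
      ring
    · have hieq : i = ⟨2*n, by omega⟩ := by
        apply Fin.ext; have := i.isLt; simp only []; omega
      rw [hieq, apply_hi n t k x]
      have hxlast : x ⟨2*n, by omega⟩ = wv n t k z - 2*(k ⟨2*n, by omega⟩ : ℝ) := by
        simp only [hxdef]; rw [dif_neg (by simp)]
      have hsum2 : (∑ j : Fin n,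
          ((k ⟨(j:ℕ), by have := j.isLt; omega⟩ : ℝ) * x ⟨n + (j:ℕ), by have := j.isLt; omega⟩
            - (k ⟨n + (j:ℕ), by have := j.isLt; omega⟩ : ℝ) * x ⟨(j:ℕ), by have := j.isLt; omega⟩)) =
          (∑ j : Fin n, ((k ⟨(j:ℕ), by have := j.isLt; omega⟩ : ℝ) * z ⟨n + (j:ℕ), by have := j.isLt; omega⟩
            - (k ⟨n + (j:ℕ), by have := j.isLt; omega⟩ : ℝ) * z ⟨(j:ℕ), by have := j.isLt; omega⟩)) / t := by
        rw [Finset.sum_div]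
        refine Finset.sum_congr rfl fun j _ => ?_
        have hj1 : ((⟨(j:ℕ), by have := j.isLt; omega⟩ : Fin (2*n+1)) : ℕ) < 2*n := by
          simp only []; have := j.isLt; omega
        have hj2 : ((⟨n + (j:ℕ), by have := j.isLt; omega⟩ : Fin (2*n+1)) : ℕ) < 2*n := by
          simp only []; have := j.isLt; omega
        simp only [hxdef, dif_pos hj1, dif_pos hj2]
        field_simp
        ring
      rw [hxlast, hsum2]
      unfold wv
      field_simp
      ring

end S5

namespace S5

lemma floor_bounds (r : ℝ) :
    -1 ≤ r - 2*((⌊(r+1)/2⌋ : ℤ) : ℝ) ∧ r - 2*((⌊(r+1)/2⌋ : ℤ) : ℝ) < 1 := by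
  have h1 := Int.floor_le ((r+1)/2)
  have h2 := Int.lt_floor_add_one ((r+1)/2)
  constructor <;> [linarith; linarith]

lemma int_uniq (a b : ℤ) (r : ℝ) (ha1 : -1 ≤ r - 2*(a:ℝ)) (ha2 : r - 2*(a:ℝ) < 1)
    (hb1 : -1 ≤ r - 2*(b:ℝ)) (hb2 : r - 2*(b:ℝ) < 1) : a = b := by
  have h1 : a < b + 1 := by exact_mod_cast show (a:ℝ) < (b:ℝ) + 1 by linarith
  have h2 : b < a + 1 := by exact_mod_cast show (b:ℝ) < (a:ℝ) + 1 by linarith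
  omega

lemma wv_congr (n : ℕ) (t : ℝ) (k k' : Fin (2*n+1) → ℤ) (z : Pt n)
    (h : ∀ i : Fin (2*n+1), (i:ℕ) < 2*n → k i = k' i) : wv n t k z = wv n t k' z := by
  unfold wv
  congr 2
  refine Finset.sum_congr rfl fun j _ => ?_
  rw [h ⟨(j:ℕ), by have := j.isLt; omega⟩ (show (j:ℕ) < 2*n by have := j.isLt; omega),
      h ⟨n + (j:ℕ), by have := j.isLt; omega⟩ (show n + (j:ℕ) < 2*n by have := j.isLt; omega)]

end S5


/-- the translates `Q^t_k = τ_{δ_t(k)}(δ_t(Q))` of the dilated unit cell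
tile `ℝ^N`. -/
theorem stmt_5 (n : ℕ) (hn : 1 ≤ n) (t : ℝ) (ht : 0 < t) :
    (⋃ k : Fin (2*n+1) → ℤ,
      Hmul n (fun i => 2 * dil n t (fun j => (k j : ℝ)) i) '' (dil n t '' Qcell n))
        = Set.univ ∧
    ∀ k h : Fin (2*n+1) → ℤ, k ≠ h →
      Disjoint
        (Hmul n (fun i => 2 * dil n t (fun j => (k j : ℝ)) i) '' (dil n t '' Qcell n))
        (Hmul n (fun i => 2 * dil n t (fun j => (h j : ℝ)) i) '' (dil n t '' Qcell n)) := by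
  constructor
  · apply Set.eq_univ_of_forall
    intro z
    rw [Set.mem_iUnion]
    set k0 : Fin (2*n+1) → ℤ := fun i => ⌊(z i / t + 1)/2⌋ with hk0
    set k : Fin (2*n+1) → ℤ := fun i =>
      if (i:ℕ) < 2*n then k0 i else ⌊(S5.wv n t k0 z + 1)/2⌋ with hk
    refine ⟨k, (S5.mem_tile_iff n t ht k z).mpr ⟨fun i hi => ?_, ?_⟩⟩
    · have : k i = k0 i := by simp only [hk, if_pos hi]
      rw [this, hk0]
      exact S5.floor_bounds (z i / t)
    · have hwk : S5.wv n t k z = S5.wv n t k0 z := by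
        apply S5.wv_congr
        intro i hi
        simp only [hk, if_pos hi]
      have hklast : k ⟨2*n, by omega⟩ = ⌊(S5.wv n t k0 z + 1)/2⌋ := by
        simp only [hk]
        rw [if_neg (by simp)]
      rw [hwk, hklast]
      exact S5.floor_bounds (S5.wv n t k0 z)
  · intro k h hkh
    rw [Set.disjoint_left]
    rintro z hzk hzh
    obtain ⟨hk1, hk2⟩ := (S5.mem_tile_iff n t ht k z).mp hzk
    obtain ⟨hh1, hh2⟩ := (S5.mem_tile_iff n t ht h z).mp hzh
    apply hkh
    have hlo : ∀ i : Fin (2*n+1), (i:ℕ) < 2*n → k i = h i := by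
      intro i hi
      obtain ⟨a1, a2⟩ := hk1 i hi
      obtain ⟨b1, b2⟩ := hh1 i hi
      exact S5.int_uniq (k i) (h i) (z i / t) a1 a2 b1 b2
    funext i
    by_cases hi : (i:ℕ) < 2*n
    · exact hlo i hi
    · have hieq : i = ⟨2*n, by omega⟩ := by
        apply Fin.ext; have := i.isLt; simp only []; omega
      rw [hieq]
      have hwv : S5.wv n t k z = S5.wv n t h z := S5.wv_congr n t k h z hlo
      rw [hwv] at hk2
      exact S5.int_uniq _ _ (S5.wv n t h z) hk2.1 hk2.2 hh2.1 hh2.2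

end
end

section
/- Let n ≥ 1, N = 2n+1 and m = 2n, and fix q ∈ ℝ^m. For a twice continuously differentiable function u : ℝ^N → ℝ, the horizontal gradient satisfies ∇_X u(x) = q for all x ∈ ℝ^N if and only if there exists a ∈ ℝ such that u(x) = q·π_m(x) + a for all x ∈ ℝ^N (i.e. u is H-affine with horizontal slope q). -/
open MeasureTheory Filter Topology Set

noncomputable section

noncomputable def Hlin (n : ℕ) (q : EuclideanSpace ℝ (Fin (2*n))) : Pt n →L[ℝ] ℝ :=
  ∑ i : Fin (2*n), q i • ContinuousLinearMap.proj (R := ℝ) (φ := fun _ : Fin (2*n+1) => ℝ)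
      (Fin.castLE (by omega) i)

lemma HlinApply (n : ℕ) (q : EuclideanSpace ℝ (Fin (2*n))) (x : Pt n) :
    Hlin n q x = ∑ i : Fin (2*n), q i * x (Fin.castLE (by omega) i) := by
  simp [Hlin]

lemma HlinSingle (n : ℕ) (q : EuclideanSpace ℝ (Fin (2*n))) (k : Fin (2*n+1)) :
    Hlin n q (Pi.single k 1) = if h : (k : ℕ) < 2*n then q ⟨k, h⟩ else 0 := by
  rw [HlinApply]
  split
  · next h =>
    rw [Finset.sum_eq_single (⟨(k:ℕ), h⟩ : Fin (2*n))]
    · have : (Fin.castLE (by omega : 2*n ≤ 2*n+1) ⟨(k:ℕ), h⟩) = k := by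
        apply Fin.ext; simp
      rw [this, Pi.single_eq_same, mul_one]
    · intro i _ hi
      rw [Pi.single_eq_of_ne, mul_zero]
      intro hc
      exact hi (by apply Fin.ext; simpa [Fin.ext_iff] using hc)
    · simp
  · next h =>
    apply Finset.sum_eq_zero
    intro i _
    rw [Pi.single_eq_of_ne, mul_zero]
    intro hc
    have := i.isLt
    simp [Fin.ext_iff] at hc
    omega

lemma lin_eq_Hlin (n : ℕ) (q : EuclideanSpace ℝ (Fin (2*n))) (x : Pt n) :
    lin n q x = Hlin n q x := by
  rw [HlinApply]; rfl

lemma XD_eq (n : ℕ) (u : Pt n → ℝ) (q : EuclideanSpace ℝ (Fin (2*n)))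
    (h : ∀ x, hgrad n u x = q) (x : Pt n) (i : Fin (2*n)) : XD n i u x = q i := by
  have := congrArg (fun v => v i) (h x)
  simpa [hgrad] using this

/-- a `C²` function has constant horizontal gradient `q` iff it is
H-affine with horizontal slope `q`. -/
theorem stmt_6 (n : ℕ) (hn : 1 ≤ n) (q : EuclideanSpace ℝ (Fin (2*n)))
    (u : Pt n → ℝ) (hu : ContDiff ℝ 2 u) :
    (∀ x : Pt n, hgrad n u x = q) ↔ ∃ a : ℝ, ∀ x : Pt n, u x = lin n q x + a := by
  constructor
  · intro h
    have hu2 : ContDiff ℝ 1 (fderiv ℝ u) := hu.fderiv_right (by norm_num)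
    have hdF : ∀ x : Pt n, HasFDerivAt (fderiv ℝ u) (fderiv ℝ (fderiv ℝ u) x) x :=
      fun x => (hu2.differentiable (by norm_num) x).hasFDerivAt
    have hhalf : ∀ (k : Fin (2*n+1)) (x : Pt n), HasFDerivAt (fun y : Pt n => y k / 2)
        ((2⁻¹:ℝ) • ContinuousLinearMap.proj (R := ℝ) (φ := fun _ : Fin (2*n+1) => ℝ) k) x := by
      intro k x
      have hp := ((ContinuousLinearMap.proj (R := ℝ) (φ := fun _ : Fin (2*n+1) => ℝ)
        k).hasFDerivAt (x := x)).const_mul (𝕜 := ℝ) (2⁻¹:ℝ)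
      have heq : (fun y : Pt n => y k / 2) = (fun y : Pt n => (2⁻¹:ℝ) * y k) :=
        funext fun y => by ring
      rw [heq]
      exact hp
    have hApp : ∀ (x : Pt n) (w : Pt n), HasFDerivAt (fun y => fderiv ℝ u y w)
        ((ContinuousLinearMap.apply ℝ ℝ w).comp (fderiv ℝ (fderiv ℝ u) x)) x :=
      fun x w => (ContinuousLinearMap.apply ℝ ℝ w).hasFDerivAt.comp x (hdF x)
    have hsymm : ∀ (x v w : Pt n),
        fderiv ℝ (fderiv ℝ u) x v w = fderiv ℝ (fderiv ℝ u) x w v :=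
      fun x => (hu.contDiffAt.isSymmSndFDerivAt (by norm_num))
    -- the two constancy equations
    have h1 : ∀ x : Pt n, fderiv ℝ u x (Pi.single (⟨0, by omega⟩ : Fin (2*n+1)) 1)
        - x ⟨n, by omega⟩ / 2 * fderiv ℝ u x (Pi.single (⟨2*n, by omega⟩ : Fin (2*n+1)) 1)
        = q ⟨0, by omega⟩ := by
      intro x
      have := XD_eq n u q h x ⟨0, by omega⟩
      rwa [XD, dif_pos (show ((⟨0, by omega⟩ : Fin (2*n)) : ℕ) < n from hn)] at this
    have h2 : ∀ x : Pt n, fderiv ℝ u x (Pi.single (⟨n, by omega⟩ : Fin (2*n+1)) 1)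
        + x ⟨0, by omega⟩ / 2 * fderiv ℝ u x (Pi.single (⟨2*n, by omega⟩ : Fin (2*n+1)) 1)
        = q ⟨n, by omega⟩ := by
      intro x
      have := XD_eq n u q h x ⟨n, by omega⟩
      rw [XD, dif_neg (by simp)] at this
      simpa using this
    -- T x = 0
    have hT : ∀ x : Pt n, fderiv ℝ u x (Pi.single (⟨2*n, by omega⟩ : Fin (2*n+1)) 1) = 0 := by
      intro x
      have H1 := ((hApp x (Pi.single (⟨0, by omega⟩ : Fin (2*n+1)) 1)).sub
        ((hhalf (⟨n, by omega⟩ : Fin (2*n+1)) x).mul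
            (hApp x (Pi.single (⟨2*n, by omega⟩ : Fin (2*n+1)) 1))))
      have H10 : HasFDerivAt (fun y : Pt n =>
          fderiv ℝ u y (Pi.single (⟨0, by omega⟩ : Fin (2*n+1)) 1)
          - y ⟨n, by omega⟩ / 2 * fderiv ℝ u y (Pi.single (⟨2*n, by omega⟩ : Fin (2*n+1)) 1))
          (0 : Pt n →L[ℝ] ℝ) x := by
        have heq : (fun y : Pt n =>
            fderiv ℝ u y (Pi.single (⟨0, by omega⟩ : Fin (2*n+1)) 1)
            - y ⟨n, by omega⟩ / 2 * fderiv ℝ u y (Pi.single (⟨2*n, by omega⟩ : Fin (2*n+1)) 1))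
            = fun _ => q ⟨0, by omega⟩ := funext h1
        rw [heq]; exact hasFDerivAt_const _ _
      have HE1 := H10.unique H1
      have E1 : ∀ v : Pt n, (0:ℝ) =
          fderiv ℝ (fderiv ℝ u) x v (Pi.single (⟨0, by omega⟩ : Fin (2*n+1)) 1)
          - (x ⟨n, by omega⟩ / 2
              * fderiv ℝ (fderiv ℝ u) x v (Pi.single (⟨2*n, by omega⟩ : Fin (2*n+1)) 1)
            + fderiv ℝ u x (Pi.single (⟨2*n, by omega⟩ : Fin (2*n+1)) 1)
              * (v ⟨n, by omega⟩ / 2)) := by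
        intro v
        have hv := ContinuousLinearMap.ext_iff.1 HE1 v
        simp at hv ⊢
        linear_combination hv
      have H2 := ((hApp x (Pi.single (⟨n, by omega⟩ : Fin (2*n+1)) 1)).add
        ((hhalf (⟨0, by omega⟩ : Fin (2*n+1)) x).mul
            (hApp x (Pi.single (⟨2*n, by omega⟩ : Fin (2*n+1)) 1))))
      have H20 : HasFDerivAt (fun y : Pt n =>
          fderiv ℝ u y (Pi.single (⟨n, by omega⟩ : Fin (2*n+1)) 1)
          + y ⟨0, by omega⟩ / 2 * fderiv ℝ u y (Pi.single (⟨2*n, by omega⟩ : Fin (2*n+1)) 1))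
          (0 : Pt n →L[ℝ] ℝ) x := by
        have heq : (fun y : Pt n =>
            fderiv ℝ u y (Pi.single (⟨n, by omega⟩ : Fin (2*n+1)) 1)
            + y ⟨0, by omega⟩ / 2 * fderiv ℝ u y (Pi.single (⟨2*n, by omega⟩ : Fin (2*n+1)) 1))
            = fun _ => q ⟨n, by omega⟩ := funext h2
        rw [heq]; exact hasFDerivAt_const _ _
      have HE2 := H20.unique H2
      have E2 : ∀ v : Pt n, (0:ℝ) =
          fderiv ℝ (fderiv ℝ u) x v (Pi.single (⟨n, by omega⟩ : Fin (2*n+1)) 1)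
          + (x ⟨0, by omega⟩ / 2
              * fderiv ℝ (fderiv ℝ u) x v (Pi.single (⟨2*n, by omega⟩ : Fin (2*n+1)) 1)
            + fderiv ℝ u x (Pi.single (⟨2*n, by omega⟩ : Fin (2*n+1)) 1)
              * (v ⟨0, by omega⟩ / 2)) := by
        intro v
        have hv := ContinuousLinearMap.ext_iff.1 HE2 v
        simp at hv ⊢
        linear_combination hv
      have hne1 : (⟨2*n, by omega⟩ : Fin (2*n+1)) ≠ ⟨n, by omega⟩ := by
        simp [Fin.ext_iff]; omega
      have hne2 : (⟨2*n, by omega⟩ : Fin (2*n+1)) ≠ ⟨0, by omega⟩ := by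
        simp [Fin.ext_iff]; omega
      have e1 := E1 (Pi.single (⟨n, by omega⟩ : Fin (2*n+1)) 1)
      have e2 := E2 (Pi.single (⟨0, by omega⟩ : Fin (2*n+1)) 1)
      have e3 := E1 (Pi.single (⟨2*n, by omega⟩ : Fin (2*n+1)) 1)
      have e4 := E2 (Pi.single (⟨2*n, by omega⟩ : Fin (2*n+1)) 1)
      rw [Pi.single_eq_same] at e1 e2
      rw [Pi.single_eq_of_ne (Ne.symm hne1)] at e3
      rw [Pi.single_eq_of_ne (Ne.symm hne2)] at e4
      have s1 := hsymm x (Pi.single (⟨n, by omega⟩ : Fin (2*n+1)) 1)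
        (Pi.single (⟨0, by omega⟩ : Fin (2*n+1)) 1)
      have s2 := hsymm x (Pi.single (⟨n, by omega⟩ : Fin (2*n+1)) 1)
        (Pi.single (⟨2*n, by omega⟩ : Fin (2*n+1)) 1)
      have s3 := hsymm x (Pi.single (⟨0, by omega⟩ : Fin (2*n+1)) 1)
        (Pi.single (⟨2*n, by omega⟩ : Fin (2*n+1)) 1)
      linear_combination e1 - e2 + (x ⟨0, by omega⟩ / 2) * e3 + (x ⟨n, by omega⟩ / 2) * e4
        + s1 - (x ⟨n, by omega⟩ / 2) * s2 - (x ⟨0, by omega⟩ / 2) * s3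
    -- all first derivatives agree with Hlin
    have hDk : ∀ (x : Pt n) (k : Fin (2*n+1)),
        fderiv ℝ u x (Pi.single k 1) = Hlin n q (Pi.single k 1) := by
      intro x k
      rw [HlinSingle]
      by_cases hk : (k : ℕ) < 2*n
      · rw [dif_pos hk]
        have := XD_eq n u q h x ⟨(k:ℕ), hk⟩
        rw [XD] at this
        by_cases hkn : (k : ℕ) < n
        · rw [dif_pos hkn] at this
          rw [hT x] at this
          simpa using this
        · rw [dif_neg hkn] at this
          rw [hT x] at this
          simpa using this
      · rw [dif_neg hk]
        have hk2 : k = ⟨2*n, by omega⟩ := by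
          have := k.isLt; apply Fin.ext; simp; omega
        rw [hk2]; exact hT x
    -- u - Hlin has zero derivative
    have hdiffu : Differentiable ℝ u := hu.differentiable (by norm_num)
    have hw : ∀ x : Pt n, fderiv ℝ (fun y => u y - Hlin n q y) x = 0 := by
      intro x
      rw [fderiv_fun_sub (hdiffu x) (Hlin n q).differentiableAt, (Hlin n q).fderiv]
      ext v
      have hv : v = ∑ k : Fin (2*n+1), v k • (Pi.single k 1 : Pt n) := by
        funext j
        simp [Pi.single_apply]
      rw [ContinuousLinearMap.sub_apply, ContinuousLinearMap.zero_apply]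
      conv_lhs => rw [hv]
      rw [map_sum, map_sum, ← Finset.sum_sub_distrib]
      apply Finset.sum_eq_zero
      intro k _
      rw [_root_.map_smul, _root_.map_smul, hDk x k]
      ring
    have hconst := is_const_of_fderiv_eq_zero (𝕜 := ℝ)
      (f := fun y => u y - Hlin n q y) (hdiffu.sub (Hlin n q).differentiable) hw
    refine ⟨u 0 - Hlin n q 0, fun x => ?_⟩
    have := hconst x 0
    rw [lin_eq_Hlin]
    linarith [this]
  · rintro ⟨a, ha⟩ x
    have hu' : u = fun y => Hlin n q y + a := by
      funext y; rw [ha y, lin_eq_Hlin]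
    have hf : ∀ y : Pt n, fderiv ℝ u y = Hlin n q := by
      intro y
      rw [hu']
      exact ((Hlin n q).hasFDerivAt.add_const a).fderiv
    ext i
    simp only [hgrad, WithLp.equiv_symm_apply, PiLp.toLp_apply]
    rw [XD]
    have hft : Hlin n q (Pi.single (⟨2*n, by omega⟩ : Fin (2*n+1)) 1) = 0 := by
      rw [HlinSingle, dif_neg (by simp)]
    split
    · next hlt =>
      rw [hf x, hft, HlinSingle, dif_pos i.isLt]
      simp
    · next hlt =>
      rw [hf x, hft, HlinSingle, dif_pos i.isLt]
      simp


end
end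

section
/- Horizontal Poincaré inequality: let n ≥ 1, N = 2n+1, let A ⊆ ℝ^N be a bounded open set and let 1 ≤ α < ∞. Then there exists a constant C > 0 such that ∫_A |u(x)|^α dx ≤ C ∫_A |∇_X u(x)|^α dx for every smooth function u compactly supported in A. -/
open MeasureTheory Filter Topology Set

noncomputable section

open scoped ENNReal


/-- The direction of the flow of `X_1` through `x`. -/
def vv7 (n : ℕ) (x : Pt n) : Pt n := fun i =>
  (Pi.single (⟨0, by omega⟩ : Fin (2*n+1)) (1:ℝ) : Pt n) i
    - (x ⟨n, by omega⟩ / 2) * (Pi.single (⟨2*n, by omega⟩ : Fin (2*n+1)) (1:ℝ) : Pt n) i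

lemma vv7_cont (n : ℕ) : Continuous (vv7 n) := by
  unfold vv7
  refine continuous_pi fun i => ?_
  exact continuous_const.sub (((continuous_apply _).div_const 2).mul continuous_const)

lemma vv7_apply_zero (n : ℕ) (hn : 1 ≤ n) (x : Pt n) :
    vv7 n x ⟨0, by omega⟩ = 1 := by
  have h1 : ((⟨0, by omega⟩ : Fin (2*n+1))) ≠ ⟨2*n, by omega⟩ := by
    simp only [ne_eq, Fin.mk.injEq]; omega
  simp [vv7, Pi.single_apply, h1]
  intro h
  exfalso
  omega

lemma vv7_apply_n (n : ℕ) (hn : 1 ≤ n) (x : Pt n) :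
    vv7 n x ⟨n, by omega⟩ = 0 := by
  have h1 : ((⟨n, by omega⟩ : Fin (2*n+1))) ≠ ⟨0, by omega⟩ := by
    simp only [ne_eq, Fin.mk.injEq]; omega
  have h2 : ((⟨n, by omega⟩ : Fin (2*n+1))) ≠ ⟨2*n, by omega⟩ := by
    simp only [ne_eq, Fin.mk.injEq]; omega
  simp [vv7, Pi.single_apply, h1, h2]
  omega

lemma mp7 (n : ℕ) (hn : 1 ≤ n) (t : ℝ) :
    MeasurePreserving (fun x : Pt n => x + t • vv7 n x) volume volume := by
  classical
  have hab : (⟨2*n, by omega⟩ : Fin (2*n+1)) ≠ ⟨n, by omega⟩ := by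
    simp only [ne_eq, Fin.mk.injEq]; omega
  have h1 : MeasurePreserving
      (Matrix.toLin' ((Matrix.TransvectionStruct.mk (⟨2*n, by omega⟩ : Fin (2*n+1))
          ⟨n, by omega⟩ hab (-(t/2))).toMatrix))
      (volume : Measure (Pt n)) volume :=
    Real.volume_preserving_transvectionStruct _
  have h2 : MeasurePreserving
      (fun y : Pt n => y + t • (Pi.single (⟨0, by omega⟩ : Fin (2*n+1)) (1:ℝ) : Pt n))
      volume volume := measurePreserving_add_right volume _
  have h3 := h2.comp h1
  have heq : (fun x : Pt n => x + t • vv7 n x) =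
      (fun y : Pt n => y + t • (Pi.single (⟨0, by omega⟩ : Fin (2*n+1)) (1:ℝ) : Pt n)) ∘
        (Matrix.toLin' ((Matrix.TransvectionStruct.mk (⟨2*n, by omega⟩ : Fin (2*n+1))
          ⟨n, by omega⟩ hab (-(t/2))).toMatrix)) := by
    funext x
    simp only [Function.comp_apply, Matrix.TransvectionStruct.toMatrix_mk,
      Matrix.toLin'_apply, Matrix.transvection, Matrix.add_mulVec, Matrix.one_mulVec,
      Matrix.single_mulVec]
    funext i
    simp only [vv7, Pi.add_apply, Pi.smul_apply, Pi.sub_apply, smul_eq_mul,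
      Function.update_apply, Pi.zero_apply, Pi.single_apply]
    split_ifs <;> ring
  rw [heq]
  exact h3

lemma jensen7 {T α : ℝ} (hT : 0 < T) (hα : 1 ≤ α) {h : ℝ → ℝ}
    (hc : Continuous h) (hnn : ∀ t, 0 ≤ h t) {M : ℝ} (hM : ∀ t, h t ≤ M) :
    (∫ t in Ioc (0:ℝ) T, h t) ^ α ≤ T ^ (α - 1) * ∫ t in Ioc (0:ℝ) T, h t ^ α := by
  rcases eq_or_lt_of_le hα with h1 | h1
  · rw [← h1]
    simp [Real.rpow_one]
  · set μ : Measure ℝ := volume.restrict (Ioc (0:ℝ) T) with hμ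
    have hμuniv : μ univ = ENNReal.ofReal T := by
      simp [hμ, Real.volume_Ioc]
    haveI : IsFiniteMeasure μ := ⟨by rw [hμuniv]; exact ENNReal.ofReal_lt_top⟩
    have hpq : Real.HolderConjugate α (Real.conjExponent α) :=
      Real.HolderConjugate.conjExponent h1
    have hfm : MemLp h (ENNReal.ofReal α) μ :=
      MemLp.of_bound hc.aestronglyMeasurable M
        (ae_of_all _ fun t => by
          rw [Real.norm_eq_abs, abs_of_nonneg (hnn t)]; exact hM t)
    have hgm : MemLp (fun _ : ℝ => (1:ℝ)) (ENNReal.ofReal (Real.conjExponent α)) μ :=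
      memLp_const 1
    have H := MeasureTheory.integral_mul_norm_le_Lp_mul_Lq hpq hfm hgm
    simp only [norm_one, mul_one, Real.norm_eq_abs, Real.one_rpow] at H
    have habs : ∀ t, |h t| = h t := fun t => abs_of_nonneg (hnn t)
    simp only [habs] at H
    have hconst : ∫ _ : ℝ, (1:ℝ) ∂μ = T := by
      rw [integral_const, measureReal_def, hμuniv, smul_eq_mul, mul_one, ENNReal.toReal_ofReal hT.le]
    rw [hconst] at H
    -- H : ∫ h ∂μ ≤ (∫ h^α ∂μ)^(1/α) * T^(1/conjExponent α)
    have hI0 : 0 ≤ ∫ t, h t ∂μ := integral_nonneg fun t => hnn t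
    have hJ0 : 0 ≤ ∫ t, h t ^ α ∂μ :=
      integral_nonneg fun t => Real.rpow_nonneg (hnn t) α
    have hα0 : (0:ℝ) ≤ α := by linarith
    have key := Real.rpow_le_rpow hI0 H hα0
    have hne : α ≠ 0 := by linarith
    rw [Real.mul_rpow (Real.rpow_nonneg hJ0 _) (Real.rpow_nonneg hT.le _),
      ← Real.rpow_mul hJ0, ← Real.rpow_mul hT.le, one_div_mul_cancel hne,
      Real.rpow_one] at key
    have hsub : α - 1 ≠ 0 := sub_ne_zero.mpr (ne_of_gt h1)
    have hq : 1 / Real.conjExponent α * α = α - 1 := by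
      rw [Real.conjExponent, one_div_div, div_mul_cancel₀ _ hne]
    rw [hq] at key
    calc (∫ t in Ioc (0:ℝ) T, h t) ^ α ≤ (∫ t, h t ^ α ∂μ) * T ^ (α - 1) := key
    _ = T ^ (α - 1) * ∫ t in Ioc (0:ℝ) T, h t ^ α := mul_comm _ _


lemma XD0_eq (n : ℕ) (hn : 1 ≤ n) (u : Pt n → ℝ) (y : Pt n) :
    XD n ⟨0, by omega⟩ u y =
      fderiv ℝ u y (Pi.single (⟨0, by omega⟩ : Fin (2*n+1)) 1)
        - y ⟨n, by omega⟩ / 2 *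
          fderiv ℝ u y (Pi.single (⟨2*n, by omega⟩ : Fin (2*n+1)) 1) := by
  have h0n : ((⟨0, by omega⟩ : Fin (2*n)) : ℕ) < n := hn
  simp only [XD, dif_pos h0n]
  rfl

theorem stmt_7' (n : ℕ) (hn : 1 ≤ n) (A : Set (Pt n)) (hAo : IsOpen A)
    (hAb : Bornology.IsBounded A) (α : ℝ) (hα : 1 ≤ α) :
    ∃ C > (0:ℝ), ∀ u : Pt n → ℝ, ContDiff ℝ (⊤ : ℕ∞) u → HasCompactSupport u →
      tsupport u ⊆ A →
      ∫ x in A, |u x| ^ α ≤ C * ∫ x in A, ‖hgrad n u x‖ ^ α := by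
  classical
  obtain ⟨R0, hR0⟩ := (isBounded_iff_forall_norm_le).1 hAb
  set R : ℝ := max R0 1 with hRdef
  have hR1 : (1:ℝ) ≤ R := le_max_right _ _
  have hRA : ∀ x ∈ A, ‖x‖ ≤ R := fun x hx => (hR0 x hx).trans (le_max_left _ _)
  set T : ℝ := 2*R + 1 with hTdef
  have hT0 : (0:ℝ) < T := by rw [hTdef]; linarith
  have hα0 : (0:ℝ) < α := lt_of_lt_of_le one_pos hα
  have hαne : α ≠ 0 := ne_of_gt hα0
  have h2n : 0 < 2*n := by omega
  refine ⟨T ^ α, Real.rpow_pos_of_pos hT0 α, ?_⟩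
  intro u hu hucs husupp
  set X : Pt n → ℝ := XD n ⟨0, h2n⟩ u with hXdef
  -- continuity facts
  have hfc : Continuous (fderiv ℝ u) := hu.continuous_fderiv (by simp)
  have happ : ∀ w : Pt n, Continuous fun y : Pt n => fderiv ℝ u y w :=
    fun w => hfc.clm_apply continuous_const
  have hXDcont : ∀ i : Fin (2*n), Continuous (XD n i u) := by
    intro i
    unfold XD
    by_cases h : (i:ℕ) < n
    · simp only [dif_pos h]
      exact (happ _).sub (((continuous_apply _).div_const 2).mul (happ _))
    · simp only [dif_neg h]
      exact (happ _).add (((continuous_apply _).div_const 2).mul (happ _))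
  have hXD0 : ∀ (i : Fin (2*n)) (y : Pt n), y ∉ tsupport u → XD n i u y = 0 := by
    intro i y hy
    have h0 : fderiv ℝ u y = 0 := by
      by_contra h
      exact hy (support_fderiv_subset ℝ (by exact h))
    unfold XD
    by_cases h : (i:ℕ) < n <;> simp [h, h0]
  have hXcont : Continuous X := hXDcont _
  have hXcs : HasCompactSupport X :=
    HasCompactSupport.intro hucs (fun y hy => hXD0 _ y hy)
  obtain ⟨M, hM⟩ := hXcs.exists_bound_of_continuous hXcont
  have hMabs : ∀ y, |X y| ≤ M := fun y => by
    have := hM y; rwa [Real.norm_eq_abs] at this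
  have hgrad_apply : ∀ (y : Pt n) (i : Fin (2*n)), hgrad n u y i = XD n i u y :=
    fun y i => rfl
  have hXle : ∀ y, |X y| ≤ ‖hgrad n u y‖ := by
    intro y
    rw [EuclideanSpace.norm_eq]
    have h3 : (X y)^2 ≤ ∑ i, ‖hgrad n u y i‖^2 := by
      have := Finset.single_le_sum
        (f := fun i : Fin (2*n) => ‖hgrad n u y i‖^2)
        (fun i _ => sq_nonneg _) (Finset.mem_univ (⟨0, h2n⟩ : Fin (2*n)))
      simpa [hgrad_apply, Real.norm_eq_abs, sq_abs] using this
    calc |X y| = Real.sqrt ((X y)^2) := (Real.sqrt_sq_eq_abs _).symm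
    _ ≤ _ := Real.sqrt_le_sqrt h3
  have hnormg : ∀ y, ‖hgrad n u y‖ = Real.sqrt (∑ i, (XD n i u y)^2) := by
    intro y
    rw [EuclideanSpace.norm_eq]
    congr 1
    refine Finset.sum_congr rfl fun i _ => ?_
    rw [hgrad_apply, Real.norm_eq_abs, sq_abs]
  have hgcont : Continuous fun y => ‖hgrad n u y‖ := by
    have : (fun y => ‖hgrad n u y‖) = fun y => Real.sqrt (∑ i, (XD n i u y)^2) :=
      funext hnormg
    rw [this]
    exact Real.continuous_sqrt.comp
      (continuous_finset_sum _ fun i _ => (hXDcont i).pow 2)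
  have hGcont : Continuous fun y => ‖hgrad n u y‖ ^ α :=
    hgcont.rpow_const (fun y => Or.inr hα0.le)
  have hGzero : ∀ y : Pt n, y ∉ tsupport u → ‖hgrad n u y‖ ^ α = 0 := by
    intro y hy
    rw [hnormg y, Finset.sum_eq_zero (fun i _ => by rw [hXD0 i y hy]; ring),
      Real.sqrt_zero, Real.zero_rpow hαne]
  have hGcs : HasCompactSupport fun y => ‖hgrad n u y‖ ^ α :=
    HasCompactSupport.intro hucs hGzero
  have hGint : Integrable (fun y => ‖hgrad n u y‖ ^ α) volume :=
    hGcont.integrable_of_hasCompactSupport hGcs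
  -- pointwise key estimate
  have key1 : ∀ x : Pt n, |u x| ^ α ≤
      T^(α-1) * ∫ t in Ioc (0:ℝ) T, |X (x + t • vv7 n x)| ^ α := by
    intro x
    by_cases hux : u x = 0
    · rw [hux, abs_zero, Real.zero_rpow hαne]
      exact mul_nonneg (Real.rpow_nonneg hT0.le _)
        (integral_nonneg fun t => Real.rpow_nonneg (abs_nonneg _) _)
    · set v : Pt n := vv7 n x with hv
      have hveq : v = (Pi.single (⟨0, by omega⟩ : Fin (2*n+1)) (1:ℝ) : Pt n)
          - (x ⟨n, by omega⟩ / 2) •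
            (Pi.single (⟨2*n, by omega⟩ : Fin (2*n+1)) (1:ℝ) : Pt n) := by
        funext i
        simp [hv, vv7, Pi.sub_apply, Pi.smul_apply, smul_eq_mul]
      have hlinecont : Continuous fun t : ℝ => x + t • v :=
        continuous_const.add (continuous_id.smul continuous_const)
      have hhc : Continuous fun t : ℝ => |X (x + t • v)| :=
        (hXcont.comp hlinecont).abs
      have hDer : ∀ t : ℝ, HasDerivAt (fun s : ℝ => u (x + s • v)) (X (x + t • v)) t := by
        intro t
        have h1 : HasDerivAt (fun s : ℝ => x + s • v) v t := by
          simpa using ((hasDerivAt_id t).smul_const v).const_add x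
        have h2 : HasDerivAt (fun s : ℝ => u (x + s • v))
            (fderiv ℝ u (x + t • v) v) t :=
          ((hu.differentiable (by simp) _).hasFDerivAt).comp_hasDerivAt t h1
        convert h2 using 1
        have hyN : (x + t • v) ⟨n, by omega⟩ = x ⟨n, by omega⟩ := by
          have := vv7_apply_n n hn x
          simp [Pi.add_apply, Pi.smul_apply, hv, this]
        have hfd : ∀ y : Pt n, fderiv ℝ u y v =
            fderiv ℝ u y (Pi.single (⟨0, by omega⟩ : Fin (2*n+1)) 1)
              - x ⟨n, by omega⟩ / 2 *
                fderiv ℝ u y (Pi.single (⟨2*n, by omega⟩ : Fin (2*n+1)) 1) := by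
          intro y
          rw [hveq, map_sub, _root_.map_smul, smul_eq_mul]
        rw [hXdef, XD0_eq n hn u, hfd (x + t • v), hyN]
      have hxmem : x ∈ tsupport u := subset_closure (by exact hux)
      have hx0 : |x ⟨0, by omega⟩| ≤ R := by
        have h := norm_le_pi_norm x (⟨0, by omega⟩ : Fin (2*n+1))
        rw [Real.norm_eq_abs] at h
        exact h.trans (hRA x (husupp hxmem))
      have hTx : u (x + T • v) = 0 := by
        apply image_eq_zero_of_notMem_tsupport
        intro hmem
        have h1 : |(x + T • v) ⟨0, by omega⟩| ≤ R := by
          have h := norm_le_pi_norm (x + T • v) (⟨0, by omega⟩ : Fin (2*n+1))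
          rw [Real.norm_eq_abs] at h
          exact h.trans (hRA _ (husupp hmem))
        have h2 : (x + T • v) ⟨0, by omega⟩ = x ⟨0, by omega⟩ + T := by
          have h := vv7_apply_zero n hn x
          show x ⟨0, by omega⟩ + T * vv7 n x ⟨0, by omega⟩ = x ⟨0, by omega⟩ + T
          rw [h, mul_one]
        rw [h2] at h1
        have e1 := abs_le.1 hx0
        have e2 := abs_le.1 h1
        have hTval : T = 2*R + 1 := hTdef
        linarith [e1.1, e2.2]
      have hFTC : ∫ t in (0:ℝ)..T, X (x + t • v) =
          u (x + T • v) - u (x + (0:ℝ) • v) :=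
        intervalIntegral.integral_eq_sub_of_hasDerivAt (fun t _ => hDer t)
          ((hXcont.comp hlinecont).intervalIntegrable 0 T)
      have hx00 : x + (0:ℝ) • v = x := by simp
      have habs : |u x| ≤ ∫ t in Ioc (0:ℝ) T, |X (x + t • v)| := by
        have h3 : u x = -∫ t in (0:ℝ)..T, X (x + t • v) := by
          rw [hFTC, hTx, hx00]; ring
        rw [h3, abs_neg]
        calc |∫ t in (0:ℝ)..T, X (x + t • v)|
            ≤ ∫ t in (0:ℝ)..T, |X (x + t • v)| :=
              intervalIntegral.abs_integral_le_integral_abs hT0.le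
          _ = ∫ t in Ioc (0:ℝ) T, |X (x + t • v)| :=
              intervalIntegral.integral_of_le hT0.le
      calc |u x| ^ α ≤ (∫ t in Ioc (0:ℝ) T, |X (x + t • v)|) ^ α :=
            Real.rpow_le_rpow (abs_nonneg _) habs hα0.le
        _ ≤ T^(α-1) * ∫ t in Ioc (0:ℝ) T, |X (x + t • v)| ^ α :=
            jensen7 hT0 hα hhc (fun t => abs_nonneg _) (fun t => hMabs _)
  -- pass to lintegrals
  set g : Pt n → ℝ≥0∞ := fun y => ENNReal.ofReal (|X y| ^ α) with hgdef
  have hXrpowcont : Continuous fun y : Pt n => |X y| ^ α :=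
    hXcont.abs.rpow_const (fun y => Or.inr hα0.le)
  have hgmeas : Measurable g := (ENNReal.continuous_ofReal.comp hXrpowcont).measurable
  have hFmeas : Measurable (Function.uncurry fun (x : Pt n) (t : ℝ) =>
      g (x + t • vv7 n x)) := by
    have hc : Continuous fun p : Pt n × ℝ => p.1 + p.2 • vv7 n p.1 :=
      continuous_fst.add (continuous_snd.smul ((vv7_cont n).comp continuous_fst))
    exact hgmeas.comp hc.measurable
  have key2 : ∀ x : Pt n, ENNReal.ofReal (|u x| ^ α) ≤
      ENNReal.ofReal (T ^ (α-1)) * ∫⁻ t in Ioc (0:ℝ) T, g (x + t • vv7 n x) := by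
    intro x
    have hint : IntegrableOn (fun t => |X (x + t • vv7 n x)| ^ α) (Ioc (0:ℝ) T) volume := by
      apply Continuous.integrableOn_Ioc
      exact ((hXcont.comp (continuous_const.add
        (continuous_id.smul continuous_const))).abs).rpow_const (fun t => Or.inr hα0.le)
    calc ENNReal.ofReal (|u x| ^ α)
        ≤ ENNReal.ofReal (T^(α-1) * ∫ t in Ioc (0:ℝ) T, |X (x + t • vv7 n x)| ^ α) :=
          ENNReal.ofReal_le_ofReal (key1 x)
      _ = ENNReal.ofReal (T^(α-1)) *
          ENNReal.ofReal (∫ t in Ioc (0:ℝ) T, |X (x + t • vv7 n x)| ^ α) :=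
          ENNReal.ofReal_mul (Real.rpow_nonneg hT0.le _)
      _ = ENNReal.ofReal (T^(α-1)) * ∫⁻ t in Ioc (0:ℝ) T, g (x + t • vv7 n x) := by
          rw [MeasureTheory.ofReal_integral_eq_lintegral_ofReal hint
            (ae_of_all _ fun t => Real.rpow_nonneg (abs_nonneg _) _)]
  set Jg : ℝ≥0∞ := ∫⁻ y, ENNReal.ofReal (‖hgrad n u y‖ ^ α) with hJgdef
  have hJX : (∫⁻ y, g y) ≤ Jg :=
    lintegral_mono fun y => ENNReal.ofReal_le_ofReal
      (Real.rpow_le_rpow (abs_nonneg _) (hXle y) hα0.le)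
  have hTpow : T ^ (α-1) * T = T ^ α := by
    nth_rewrite 2 [← Real.rpow_one T]
    rw [← Real.rpow_add hT0]
    norm_num
  have key3 : (∫⁻ x, ENNReal.ofReal (|u x| ^ α)) ≤ ENNReal.ofReal (T ^ α) * Jg := by
    calc (∫⁻ x, ENNReal.ofReal (|u x| ^ α))
        ≤ ∫⁻ x, ENNReal.ofReal (T ^ (α-1)) * ∫⁻ t in Ioc (0:ℝ) T, g (x + t • vv7 n x) :=
          lintegral_mono key2
      _ = ENNReal.ofReal (T ^ (α-1)) *
          ∫⁻ x, ∫⁻ t in Ioc (0:ℝ) T, g (x + t • vv7 n x) :=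
          lintegral_const_mul' _ _ ENNReal.ofReal_ne_top
      _ = ENNReal.ofReal (T ^ (α-1)) *
          ∫⁻ t in Ioc (0:ℝ) T, ∫⁻ x, g (x + t • vv7 n x) := by
          rw [lintegral_lintegral_swap hFmeas.aemeasurable]
      _ = ENNReal.ofReal (T ^ (α-1)) * ∫⁻ _t in Ioc (0:ℝ) T, (∫⁻ y, g y) := by
          congr 1
          exact lintegral_congr fun t => (mp7 n hn t).lintegral_comp hgmeas
      _ = ENNReal.ofReal (T ^ (α-1)) * ((∫⁻ y, g y) * ENNReal.ofReal T) := by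
          rw [setLIntegral_const, Real.volume_Ioc, sub_zero]
      _ ≤ ENNReal.ofReal (T ^ (α-1)) * (Jg * ENNReal.ofReal T) :=
          mul_le_mul_right (mul_le_mul_left hJX _) _
      _ = (ENNReal.ofReal (T ^ (α-1)) * ENNReal.ofReal T) * Jg := by ring
      _ = ENNReal.ofReal (T ^ α) * Jg := by
          rw [← ENNReal.ofReal_mul (Real.rpow_nonneg hT0.le _), hTpow]
  -- back to Bochner integrals
  have hu0 : ∀ x, x ∉ A → |u x| ^ α = 0 := by
    intro x hx
    have : u x = 0 := image_eq_zero_of_notMem_tsupport (fun h => hx (husupp h))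
    rw [this, abs_zero, Real.zero_rpow hαne]
  have hG0 : ∀ x, x ∉ A → ‖hgrad n u x‖ ^ α = 0 :=
    fun x hx => hGzero x (fun h => hx (husupp h))
  have hLu_eq : ∫ x in A, |u x| ^ α = (∫⁻ x, ENNReal.ofReal (|u x| ^ α)).toReal := by
    rw [setIntegral_eq_integral_of_forall_compl_eq_zero hu0,
      integral_eq_lintegral_of_nonneg_ae
        (ae_of_all _ fun x => Real.rpow_nonneg (abs_nonneg _) _)
        ((hu.continuous.abs.rpow_const (fun y => Or.inr hα0.le)).aestronglyMeasurable)]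
  have hRg_eq : ∫ x in A, ‖hgrad n u x‖ ^ α = Jg.toReal := by
    rw [setIntegral_eq_integral_of_forall_compl_eq_zero hG0,
      integral_eq_lintegral_of_nonneg_ae
        (ae_of_all _ fun x => Real.rpow_nonneg (norm_nonneg _) _)
        hGcont.aestronglyMeasurable]
  have hJgfin : Jg ≠ ⊤ := by
    have h1 : Jg ≤ ∫⁻ y, (‖(‖hgrad n u y‖ ^ α)‖₊ : ℝ≥0∞) :=
      lintegral_mono fun y => by
        rw [← enorm_eq_nnnorm, Real.enorm_eq_ofReal_abs]
        exact ENNReal.ofReal_le_ofReal (le_abs_self _)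
    exact (lt_of_le_of_lt h1 hGint.2).ne
  rw [hLu_eq, hRg_eq]
  have hfin2 : ENNReal.ofReal (T ^ α) * Jg ≠ ⊤ :=
    ENNReal.mul_ne_top ENNReal.ofReal_ne_top hJgfin
  calc (∫⁻ x, ENNReal.ofReal (|u x| ^ α)).toReal
      ≤ (ENNReal.ofReal (T ^ α) * Jg).toReal := ENNReal.toReal_mono hfin2 key3
    _ = T ^ α * Jg.toReal := by
        rw [ENNReal.toReal_mul, ENNReal.toReal_ofReal (Real.rpow_nonneg hT0.le _)]


/-- horizontal Poincaré inequality on a bounded open set, for smooth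
functions compactly supported in `A`. -/
theorem stmt_7 (n : ℕ) (hn : 1 ≤ n) (A : Set (Pt n)) (hAo : IsOpen A)
    (hAb : Bornology.IsBounded A) (α : ℝ) (hα : 1 ≤ α) :
    ∃ C > (0:ℝ), ∀ u : Pt n → ℝ, ContDiff ℝ (⊤ : ℕ∞) u → HasCompactSupport u →
      tsupport u ⊆ A →
      ∫ x in A, |u x| ^ α ≤ C * ∫ x in A, ‖hgrad n u x‖ ^ α :=
  stmt_7' n hn A hAo hAb α hα

end
end

section
/- Let n ≥ 1, N = 2n+1, m = 2n, and let f : ℝ^N × ℝ^m → ℝ satisfy (A1), (A2) and the H-periodicity assumption (A3). Then for every bounded open set A ⊆ ℝ^N, every q ∈ ℝ^m and every z ∈ ℤ^N, the minimal energy is invariant under the period-2 integer left translations: μ_q((2z) * A) = μ_q(A). -/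
open MeasureTheory Filter Topology Set

noncomputable section

/-! ### Auxiliary material for Statement 12 -/

namespace Stmt12

variable {n : ℕ}

/-- The bilinear-in-`x` part of the last coordinate of `Hmul n g x`. -/
def Sg (n : ℕ) (g x : Pt n) : ℝ :=
  ∑ j : Fin n,
    (g ⟨(j:ℕ), by have := j.isLt; omega⟩ * x ⟨n + (j:ℕ), by have := j.isLt; omega⟩
      - g ⟨n + (j:ℕ), by have := j.isLt; omega⟩ * x ⟨(j:ℕ), by have := j.isLt; omega⟩)

lemma Sg_add (g x y : Pt n) : Sg n g (x + y) = Sg n g x + Sg n g y := by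
  unfold Sg
  rw [← Finset.sum_add_distrib]
  exact Finset.sum_congr rfl fun j _ => by simp only [Pi.add_apply]; ring

lemma Sg_smul (g : Pt n) (c : ℝ) (x : Pt n) : Sg n g (c • x) = c * Sg n g x := by
  unfold Sg
  rw [Finset.mul_sum]
  exact Finset.sum_congr rfl fun j _ => by simp only [Pi.smul_apply, smul_eq_mul]; ring

/-- The linear part of the left translation by `g`. -/
def Lfun (n : ℕ) (g : Pt n) : Pt n →ₗ[ℝ] Pt n where
  toFun x := fun i => if (i:ℕ) < 2*n then x i else x i + Sg n g x / 2
  map_add' x y := by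
    funext i
    by_cases h : (i:ℕ) < 2*n <;> simp only [if_pos, if_neg, h, if_true, if_false,
      Pi.add_apply, Sg_add] <;> ring
  map_smul' c x := by
    funext i
    by_cases h : (i:ℕ) < 2*n <;> simp only [if_pos, if_neg, h, if_true, if_false,
      Pi.smul_apply, smul_eq_mul, Sg_smul, RingHom.id_apply] <;> ring

/-- The linear part as a continuous linear map. -/
def LC (n : ℕ) (g : Pt n) : Pt n →L[ℝ] Pt n := (Lfun n g).toContinuousLinearMap

lemma LC_apply (g x : Pt n) (i : Fin (2*n+1)) :
    LC n g x i = if (i:ℕ) < 2*n then x i else x i + Sg n g x / 2 := rfl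

lemma hmul_apply_ge (a b : Pt n) (i : Fin (2*n+1)) (h : ¬ (i:ℕ) < 2*n) :
    Hmul n a b i = a i + b i + Sg n a b / 2 := by
  simp only [Hmul, Sg, if_neg h]

lemma hmul_eq (g : Pt n) : Hmul n g = fun x => g + LC n g x := by
  funext x i
  by_cases h : (i:ℕ) < 2*n
  · simp only [Hmul, Pi.add_apply, LC_apply, if_pos h]
  · rw [hmul_apply_ge g x i h]
    simp only [Pi.add_apply, LC_apply, if_neg h]
    ring

lemma hasFDerivAt_hmul (g x : Pt n) : HasFDerivAt (Hmul n g) (LC n g) x := by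
  rw [hmul_eq]
  exact (LC n g).hasFDerivAt.const_add g

lemma contDiff_hmul (g : Pt n) : ContDiff ℝ (⊤ : ℕ∞) (Hmul n g) := by
  rw [hmul_eq]
  exact contDiff_const.add (LC n g).contDiff

lemma hmul_apply_lt (g x : Pt n) (i : Fin (2*n+1)) (h : (i:ℕ) < 2*n) :
    Hmul n g x i = g i + x i := by
  simp only [Hmul, if_pos h]

lemma Sg_neg_hmul (g x : Pt n) : Sg n (-g) (Hmul n g x) = - Sg n g x := by
  unfold Sg
  rw [← Finset.sum_neg_distrib]
  refine Finset.sum_congr rfl fun j _ => ?_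
  have hj := j.isLt
  rw [hmul_apply_lt g x ⟨n + (j:ℕ), by omega⟩ (by simpa using by omega),
    hmul_apply_lt g x ⟨(j:ℕ), by omega⟩ (by simpa using by omega)]
  simp only [Pi.neg_apply]
  ring

lemma hmul_inv (g x : Pt n) : Hmul n (-g) (Hmul n g x) = x := by
  funext i
  by_cases h : (i:ℕ) < 2*n
  · rw [hmul_apply_lt _ _ _ h, hmul_apply_lt _ _ _ h]
    simp only [Pi.neg_apply]
    ring
  · rw [hmul_apply_ge _ _ _ h, hmul_apply_ge _ _ _ h, Sg_neg_hmul]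
    simp only [Pi.neg_apply]
    ring

lemma hmul_inv' (g x : Pt n) : Hmul n g (Hmul n (-g) x) = x := by
  have := hmul_inv (-g) x
  rwa [neg_neg] at this

lemma det_LC (g : Pt n) : (LC n g).det = 1 := by
  have h1 : (LC n g).det = LinearMap.det (Lfun n g) := rfl
  rw [h1, ← LinearMap.det_toMatrix' (Lfun n g)]
  rw [Matrix.det_of_lowerTriangular]
  · refine Finset.prod_eq_one fun i _ => ?_
    rw [LinearMap.toMatrix'_apply]
    by_cases h : (i:ℕ) < 2*n
    · simp only [Lfun, LinearMap.coe_mk, AddHom.coe_mk]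
      simp [h]
    · have hi : (i:ℕ) = 2*n := by have := i.isLt; omega
      have hSg : Sg n g (Pi.single i (1:ℝ)) = 0 := by
        refine Finset.sum_eq_zero fun j _ => ?_
        have hj := j.isLt
        simp only [Pi.single_apply, Fin.ext_iff]
        have c1 : ¬ (n + (j:ℕ) = (i:ℕ)) := by omega
        have c2 : ¬ ((j:ℕ) = (i:ℕ)) := by omega
        rw [if_neg c1, if_neg c2]
        ring
      simp only [Lfun, LinearMap.coe_mk, AddHom.coe_mk, if_neg h, hSg]
      simp
  · intro i j hij
    have hij' : i < j := hij
    have hi : (i:ℕ) < 2*n := by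
      have h2 := j.isLt
      have h3 : (i:ℕ) < (j:ℕ) := hij'
      omega
    rw [LinearMap.toMatrix'_apply]
    simp only [Lfun, LinearMap.coe_mk, AddHom.coe_mk, if_pos hi]
    rw [Pi.single_apply, if_neg (ne_of_lt hij')]

lemma Sg_single_lt (g : Pt n) (j : ℕ) (hj : j < n) :
    Sg n g (Pi.single (⟨j, by omega⟩ : Fin (2*n+1)) 1) = -(g ⟨n + j, by omega⟩) := by
  unfold Sg
  rw [Finset.sum_eq_single (⟨j, hj⟩ : Fin n)]
  · simp only [Pi.single_apply, Fin.ext_iff]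
    have c1 : ¬ (n + j = j) := by omega
    rw [if_neg c1]
    simp
  · intro b _ hb
    have hb' : ¬ ((b:ℕ) = j) := fun e => hb (Fin.ext e)
    have hbn := b.isLt
    simp only [Pi.single_apply, Fin.ext_iff]
    have c1 : ¬ (n + (b:ℕ) = j) := by omega
    rw [if_neg c1, if_neg hb']
    ring
  · intro hmem
    exact absurd (Finset.mem_univ _) hmem

lemma Sg_single_ge (g : Pt n) (j : ℕ) (hj1 : n ≤ j) (hj2 : j < 2*n) :
    Sg n g (Pi.single (⟨j, by omega⟩ : Fin (2*n+1)) 1) = g ⟨j - n, by omega⟩ := by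
  unfold Sg
  rw [Finset.sum_eq_single (⟨j - n, by omega⟩ : Fin n)]
  · simp only [Pi.single_apply, Fin.ext_iff]
    have c1 : n + (j - n) = j := by omega
    have c2 : ¬ (j - n = j) := by omega
    rw [if_pos c1, if_neg c2]
    simp
  · intro b _ hb
    have hb' : ¬ ((b:ℕ) = j - n) := fun e => hb (Fin.ext e)
    have hbn := b.isLt
    simp only [Pi.single_apply, Fin.ext_iff]
    have c1 : ¬ (n + (b:ℕ) = j) := by omega
    have c2 : ¬ ((b:ℕ) = j) := by omega
    rw [if_neg c1, if_neg c2]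
    ring
  · intro hmem
    exact absurd (Finset.mem_univ _) hmem

lemma Sg_single_last (g : Pt n) :
    Sg n g (Pi.single (⟨2*n, by omega⟩ : Fin (2*n+1)) 1) = 0 := by
  unfold Sg
  refine Finset.sum_eq_zero fun j _ => ?_
  have hj := j.isLt
  simp only [Pi.single_apply, Fin.ext_iff]
  have c1 : ¬ (n + (j:ℕ) = 2*n) := by omega
  have c2 : ¬ ((j:ℕ) = 2*n) := by omega
  rw [if_neg c1, if_neg c2]
  ring

lemma LC_single_lt (g : Pt n) (j : ℕ) (hj : j < n) :
    LC n g (Pi.single (⟨j, by omega⟩ : Fin (2*n+1)) 1)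
      = (Pi.single (⟨j, by omega⟩ : Fin (2*n+1)) (1:ℝ)
        + (-(g ⟨n + j, by omega⟩) / 2) • (Pi.single (⟨2*n, by omega⟩ : Fin (2*n+1)) (1:ℝ) : Pt n) : Pt n) := by
  funext i
  rw [LC_apply]
  by_cases h : (i:ℕ) < 2*n
  · rw [if_pos h]
    simp only [Pi.add_apply, Pi.smul_apply, smul_eq_mul, Pi.single_apply, Fin.ext_iff]
    have c : ¬ ((i:ℕ) = 2*n) := by omega
    rw [if_neg c]
    ring
  · rw [if_neg h, Sg_single_lt g j hj]
    have hi : (i:ℕ) = 2*n := by have := i.isLt; omega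
    simp only [Pi.add_apply, Pi.smul_apply, smul_eq_mul, Pi.single_apply, Fin.ext_iff]
    have c1 : ¬ ((i:ℕ) = j) := by omega
    rw [if_pos hi, if_neg c1]
    ring

lemma LC_single_ge (g : Pt n) (j : ℕ) (hj1 : n ≤ j) (hj2 : j < 2*n) :
    LC n g (Pi.single (⟨j, by omega⟩ : Fin (2*n+1)) 1)
      = (Pi.single (⟨j, by omega⟩ : Fin (2*n+1)) (1:ℝ)
        + (g ⟨j - n, by omega⟩ / 2) • (Pi.single (⟨2*n, by omega⟩ : Fin (2*n+1)) (1:ℝ) : Pt n) : Pt n) := by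
  funext i
  rw [LC_apply]
  by_cases h : (i:ℕ) < 2*n
  · rw [if_pos h]
    simp only [Pi.add_apply, Pi.smul_apply, smul_eq_mul, Pi.single_apply, Fin.ext_iff]
    have c : ¬ ((i:ℕ) = 2*n) := by omega
    rw [if_neg c]
    ring
  · rw [if_neg h, Sg_single_ge g j hj1 hj2]
    have hi : (i:ℕ) = 2*n := by have := i.isLt; omega
    simp only [Pi.add_apply, Pi.smul_apply, smul_eq_mul, Pi.single_apply, Fin.ext_iff]
    have c1 : ¬ ((i:ℕ) = j) := by omega
    rw [if_pos hi, if_neg c1]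
    ring

lemma LC_single_last (g : Pt n) :
    LC n g (Pi.single (⟨2*n, by omega⟩ : Fin (2*n+1)) 1)
      = Pi.single (⟨2*n, by omega⟩ : Fin (2*n+1)) 1 := by
  funext i
  rw [LC_apply]
  by_cases h : (i:ℕ) < 2*n
  · rw [if_pos h]
  · rw [if_neg h, Sg_single_last g]
    ring

/-- The `H`-linear function as a linear map. -/
def linF (n : ℕ) (q : EuclideanSpace ℝ (Fin (2*n))) : Pt n →ₗ[ℝ] ℝ where
  toFun := lin n q
  map_add' x y := by
    unfold lin
    rw [← Finset.sum_add_distrib]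
    exact Finset.sum_congr rfl fun i _ => by simp only [Pi.add_apply]; ring
  map_smul' c x := by
    unfold lin
    simp only [RingHom.id_apply, smul_eq_mul]
    rw [Finset.mul_sum]
    exact Finset.sum_congr rfl fun i _ => by simp only [Pi.smul_apply, smul_eq_mul]; ring

def linC (n : ℕ) (q : EuclideanSpace ℝ (Fin (2*n))) : Pt n →L[ℝ] ℝ :=
  (linF n q).toContinuousLinearMap

lemma lin_eq_linC (q : EuclideanSpace ℝ (Fin (2*n))) : lin n q = ⇑(linC n q) := rfl

lemma fderiv_lin (q : EuclideanSpace ℝ (Fin (2*n))) (x : Pt n) :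
    fderiv ℝ (lin n q) x = linC n q := by
  rw [lin_eq_linC]
  exact (linC n q).fderiv

lemma linC_single (q : EuclideanSpace ℝ (Fin (2*n))) (i : Fin (2*n)) :
    linC n q (Pi.single (⟨(i:ℕ), by have := i.isLt; omega⟩ : Fin (2*n+1)) 1) = q i := by
  show lin n q _ = q i
  unfold lin
  rw [Finset.sum_eq_single i]
  · simp
  · intro b _ hb
    have hb' : ¬ ((b:ℕ) = (i:ℕ)) := fun e => hb (Fin.ext e)
    simp only [Pi.single_apply, Fin.ext_iff]
    rw [if_neg hb']
    ring
  · intro hmem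
    exact absurd (Finset.mem_univ _) hmem

lemma linC_single_last (q : EuclideanSpace ℝ (Fin (2*n))) :
    linC n q (Pi.single (⟨2*n, by omega⟩ : Fin (2*n+1)) 1) = 0 := by
  show lin n q _ = 0
  unfold lin
  refine Finset.sum_eq_zero fun i _ => ?_
  have hi := i.isLt
  simp only [Pi.single_apply, Fin.ext_iff]
  have c : ¬ ((i:ℕ) = 2*n) := by omega
  rw [if_neg c]
  ring

lemma XD_add_lin (q : EuclideanSpace ℝ (Fin (2*n))) (v : Pt n → ℝ)
    (hv : ContDiff ℝ (⊤ : ℕ∞) v) (x : Pt n) (i : Fin (2*n)) :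
    XD n i (fun y => lin n q y + v y) x = q i + XD n i v x := by
  have hd : DifferentiableAt ℝ v x := (hv.differentiable (by simp)) x
  have hl : DifferentiableAt ℝ (lin n q) x := by
    rw [lin_eq_linC]; exact (linC n q).differentiableAt
  have hsum : fderiv ℝ (fun y => lin n q y + v y) x = linC n q + fderiv ℝ v x := by
    show fderiv ℝ (lin n q + v) x = _
    rw [fderiv_add hl hd, fderiv_lin]
  unfold XD
  by_cases h : (i:ℕ) < n
  · rw [dif_pos h, dif_pos h, hsum]
    simp only [ContinuousLinearMap.add_apply]
    rw [linC_single q i, linC_single_last q]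
    ring
  · rw [dif_neg h, dif_neg h, hsum]
    simp only [ContinuousLinearMap.add_apply]
    rw [linC_single q i, linC_single_last q]
    ring

lemma XD_comp (g : Pt n) (v : Pt n → ℝ) (hv : ContDiff ℝ (⊤ : ℕ∞) v) (x : Pt n) (i : Fin (2*n)) :
    XD n i (fun y => v (Hmul n g y)) x = XD n i v (Hmul n g x) := by
  have hvd : DifferentiableAt ℝ v (Hmul n g x) := hv.differentiable (by simp) _
  have hcomp : fderiv ℝ (fun y => v (Hmul n g y)) x
      = (fderiv ℝ v (Hmul n g x)).comp (LC n g) := by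
    have h2 := fderiv_comp x hvd (hasFDerivAt_hmul g x).differentiableAt
    rw [(hasFDerivAt_hmul g x).fderiv] at h2
    exact h2
  unfold XD
  by_cases h : (i:ℕ) < n
  · rw [dif_pos h, dif_pos h, hcomp]
    simp only [ContinuousLinearMap.comp_apply]
    rw [LC_single_lt g (i:ℕ) h, LC_single_last g,
      hmul_apply_lt g x ⟨n + (i:ℕ), by omega⟩ (by simp only [Fin.val_mk]; omega)]
    simp only [map_add, ContinuousLinearMap.map_smul, smul_eq_mul]
    ring
  · have hi2 := i.isLt
    rw [dif_neg h, dif_neg h, hcomp]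
    simp only [ContinuousLinearMap.comp_apply]
    rw [LC_single_ge g (i:ℕ) (by omega) hi2, LC_single_last g,
      hmul_apply_lt g x ⟨(i:ℕ) - n, by omega⟩ (by simp only [Fin.val_mk]; omega)]
    simp only [map_add, ContinuousLinearMap.map_smul, smul_eq_mul]
    ring

/-- Left translation as a homeomorphism. -/
def Htrans (n : ℕ) (g : Pt n) : Homeomorph (Pt n) (Pt n) where
  toFun := Hmul n g
  invFun := Hmul n (-g)
  left_inv x := hmul_inv g x
  right_inv x := hmul_inv' g x
  continuous_toFun := (contDiff_hmul g).continuous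
  continuous_invFun := (contDiff_hmul (-g)).continuous

lemma preimage_eq_image (g : Pt n) (s : Set (Pt n)) :
    Hmul n (-g) ⁻¹' s = Hmul n g '' s := by
  ext y
  constructor
  · intro h
    exact ⟨Hmul n (-g) y, h, hmul_inv' g y⟩
  · rintro ⟨a, ha, rfl⟩
    show Hmul n (-g) (Hmul n g a) ∈ s
    rwa [hmul_inv]

lemma tsupport_comp (g : Pt n) (v : Pt n → ℝ) :
    tsupport (fun x => v (Hmul n (-g) x)) = Hmul n g '' tsupport v := by
  have h1 : Function.support (fun x => v (Hmul n (-g) x))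
      = Hmul n (-g) ⁻¹' Function.support v := rfl
  unfold tsupport
  rw [h1, ← preimage_eq_image]
  exact ((Htrans n g).symm.preimage_closure (Function.support v)).symm

lemma subset_key (n : ℕ) (f : Pt n → EuclideanSpace ℝ (Fin (2*n)) → ℝ)
    (q : EuclideanSpace ℝ (Fin (2*n)))
    (hper : ∀ (k : Fin (2*n+1) → ℤ) (x : Pt n) (p : EuclideanSpace ℝ (Fin (2*n))),
      f (Hmul n (fun i => 2 * (k i : ℝ)) x) p = f x p)
    (A : Set (Pt n)) (hA : MeasurableSet A) (z : Fin (2*n+1) → ℤ) :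
    {r | ∃ u, adm n A q u ∧ r = ∫ x in A, f x (hgrad n u x)} ⊆
    {r | ∃ u, adm n (Hmul n (fun i => 2 * (z i : ℝ)) '' A) q u ∧
      r = ∫ x in Hmul n (fun i => 2 * (z i : ℝ)) '' A, f x (hgrad n u x)} := by
  rintro r ⟨u, ⟨v, hv, hvc, hvs, rfl⟩, rfl⟩
  set g : Pt n := fun i => 2 * (z i : ℝ) with hg
  set v' : Pt n → ℝ := fun x => v (Hmul n (-g) x) with hv'def
  have hv' : ContDiff ℝ (⊤ : ℕ∞) v' := hv.comp (contDiff_hmul (-g))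
  have hts : tsupport v' = Hmul n g '' tsupport v := tsupport_comp g v
  have hcs : HasCompactSupport v' := by
    show IsCompact (tsupport v')
    rw [hts]
    exact hvc.image (contDiff_hmul g).continuous
  have hsub : tsupport v' ⊆ Hmul n g '' A := by
    rw [hts]
    exact Set.image_mono hvs
  refine ⟨fun x => lin n q x + v' x, ⟨v', hv', hcs, hsub, rfl⟩, ?_⟩
  have hinj : Set.InjOn (Hmul n g) A := by
    intro a _ b _ hab
    have := congrArg (Hmul n (-g)) hab
    rwa [hmul_inv, hmul_inv] at this
  have hder : ∀ x ∈ A, HasFDerivWithinAt (Hmul n g) (LC n g) A x :=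
    fun x _ => (hasFDerivAt_hmul g x).hasFDerivWithinAt
  rw [integral_image_eq_integral_abs_det_fderiv_smul volume hA hder hinj
      (fun x => f x (hgrad n (fun y => lin n q y + v' y) x))]
  simp only [det_LC, abs_one, one_smul]
  congr 1
  funext x
  have hgr : hgrad n (fun y => lin n q y + v' y) (Hmul n g x)
      = hgrad n (fun y => lin n q y + v y) x := by
    unfold hgrad
    refine congrArg _ (funext fun i => ?_)
    rw [XD_add_lin q v' hv' _ i, XD_add_lin q v hv x i]
    have h3 := XD_comp (-g) v hv (Hmul n g x) i
    rw [hmul_inv g x] at h3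
    rw [show XD n i v' (Hmul n g x)
        = XD n i (fun y => v (Hmul n (-g) y)) (Hmul n g x) from rfl, h3]
  rw [hgr, hg]
  exact (hper z x _).symm

end Stmt12

/-- for H-periodic integrands the minimal energy is invariant under
the period-2 integer left translations. -/
theorem stmt_12 (n : ℕ) (hn : 1 ≤ n)
    (f : Pt n → EuclideanSpace ℝ (Fin (2*n)) → ℝ)
    (hmeas : ∀ p, Measurable fun x => f x p)
    (hconv : ∀ x, ConvexOn ℝ Set.univ (f x))
    (C₁ C₂ α : ℝ) (hC₁ : 0 < C₁) (hC₂ : 0 < C₂) (hα : 1 < α)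
    (hgrowth : ∀ x p, C₁ * ‖p‖ ^ α ≤ f x p ∧ f x p ≤ C₂ * (‖p‖ ^ α + 1))
    (hper : ∀ (k : Fin (2*n+1) → ℤ) (x : Pt n) (p : EuclideanSpace ℝ (Fin (2*n))),
      f (Hmul n (fun i => 2 * (k i : ℝ)) x) p = f x p)
    (A : Set (Pt n)) (hAo : IsOpen A) (hAb : Bornology.IsBounded A)
    (q : EuclideanSpace ℝ (Fin (2*n))) (z : Fin (2*n+1) → ℤ) :
    mu n f (Hmul n (fun i => 2 * (z i : ℝ)) '' A) q = mu n f A q := by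
  have hmeasA : MeasurableSet A := hAo.measurableSet
  have hmeasgA : MeasurableSet (Hmul n (fun i => 2 * (z i : ℝ)) '' A) := by
    rw [← Stmt12.preimage_eq_image]
    exact hmeasA.preimage (Stmt12.contDiff_hmul _).continuous.measurable
  have h1 := Stmt12.subset_key n f q hper A hmeasA z
  have h2 := Stmt12.subset_key n f q hper _ hmeasgA (-z)
  have hset : Hmul n (fun i => 2 * ((-z) i : ℝ)) '' (Hmul n (fun i => 2 * (z i : ℝ)) '' A)
      = A := by
    rw [← Set.image_comp]
    have hneg : (fun i => 2 * (((-z) i : ℤ) : ℝ)) = -(fun i => 2 * ((z i : ℤ) : ℝ)) := by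
      funext i
      simp only [Pi.neg_apply]
      push_cast
      ring
    have hfun : (Hmul n (fun i => 2 * ((-z) i : ℝ))) ∘ (Hmul n (fun i => 2 * (z i : ℝ)))
        = id := by
      funext x
      simp only [Function.comp_apply, hneg, id_eq]
      exact Stmt12.hmul_inv _ x
    rw [hfun, Set.image_id]
  rw [hset] at h2
  unfold mu
  congr 1
  exact Set.Subset.antisymm h2 h1

end
end

section
/- Reduction to integer scales: let n ≥ 1, N = 2n+1, m = 2n, let f : ℝ^N × ℝ^m → ℝ be measurable and satisfy (A2), fix q ∈ ℝ^m, and for t > 0 set e_t = μ_q(δ_t(Q)) / |δ_t(Q)| with Q = [−1,1)^N. If the limit lim_{h→∞, h ∈ ℕ} e_h = C exists along integer scales, then for every sequence {t_k} of positive reals with t_k → ∞ one has lim_{k→∞} e_{t_k} = C. -/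
open MeasureTheory Filter Topology Set

noncomputable section

def cfun (n : ℕ) (t : ℝ) (i : Fin (2*n+1)) : ℝ := if (i:ℕ) < 2*n then t else t^2

lemma cfun_pos {n : ℕ} {t : ℝ} (ht : 0 < t) (i : Fin (2*n+1)) : 0 < cfun n t i := by
  unfold cfun; split <;> positivity

lemma cfun_mono {n : ℕ} {s t : ℝ} (hs : 0 < s) (hst : s ≤ t) (i : Fin (2*n+1)) :
    cfun n s i ≤ cfun n t i := by
  unfold cfun; split
  · exact hst
  · exact pow_le_pow_left₀ hs.le hst 2

lemma img_eq {n : ℕ} {t : ℝ} (ht : 0 < t) :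
    dil n t '' Qcell n = Set.pi Set.univ (fun i => Set.Ico (-(cfun n t i)) (cfun n t i)) := by
  have ht2 : (0:ℝ) < t^2 := by positivity
  ext x
  constructor
  · rintro ⟨y, hy, rfl⟩ i _
    have h := hy i
    by_cases hi : (i:ℕ) < 2*n
    · simp only [dil, cfun, if_pos hi]
      constructor <;> nlinarith [h.1, h.2]
    · simp only [dil, cfun, if_neg hi]
      constructor <;> nlinarith [h.1, h.2]
  · intro hx
    refine ⟨fun i => x i / cfun n t i, fun i => ?_, ?_⟩
    · have h := hx i (Set.mem_univ i)
      have hc := cfun_pos ht i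
      constructor
      · rw [le_div_iff₀ hc]; have := h.1; nlinarith
      · rw [div_lt_one hc]; exact h.2
    · funext i
      have hc := (cfun_pos ht i).ne'
      by_cases hi : (i:ℕ) < 2*n
      · simp only [dil, cfun, if_pos hi] at *
        field_simp
      · simp only [dil, cfun, if_neg hi] at *
        field_simp

lemma interior_img {n : ℕ} {t : ℝ} (ht : 0 < t) :
    interior (dil n t '' Qcell n)
      = Set.pi Set.univ (fun i => Set.Ioo (-(cfun n t i)) (cfun n t i)) := by
  rw [img_eq ht, interior_pi_set Set.finite_univ]
  simp [interior_Ico]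

def Vol (n : ℕ) (t : ℝ) : ℝ := 2^(2*n+1) * t^(2*n+2)

lemma Vol_pos {n : ℕ} {t : ℝ} (ht : 0 < t) : 0 < Vol n t := by unfold Vol; positivity

lemma Vol_mono {n : ℕ} {s t : ℝ} (hs : 0 < s) (hst : s ≤ t) : Vol n s ≤ Vol n t := by
  unfold Vol
  gcongr
  all_goals first | exact hs.le | rfl

lemma prod_cfun {n : ℕ} (t : ℝ) :
    ∏ i : Fin (2*n+1), (cfun n t i - -(cfun n t i)) = Vol n t := by
  have : ∀ i : Fin (2*n+1), cfun n t i - -(cfun n t i) = 2 * cfun n t i := fun i => by ring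
  simp only [this]
  rw [Fin.prod_univ_castSucc]
  have h1 : ∀ i : Fin (2*n), 2 * cfun n t i.castSucc = 2*t := by
    intro i; simp only [cfun, Fin.coe_castSucc, if_pos i.isLt]
  have h2 : 2 * cfun n t (Fin.last (2*n)) = 2*t^2 := by
    simp [cfun, Fin.val_last]
  simp only [h1, h2, Finset.prod_const, Finset.card_univ, Fintype.card_fin]
  unfold Vol
  ring

lemma vol_img {n : ℕ} {t : ℝ} (ht : 0 < t) :
    volume (dil n t '' Qcell n) = ENNReal.ofReal (Vol n t) := by
  have hnn : ∀ i ∈ Finset.univ, (0:ℝ) ≤ cfun n t i - -(cfun n t i) := by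
    intro i _; have := cfun_pos ht i; linarith
  rw [img_eq ht, volume_pi_pi]
  simp only [Real.volume_Ico]
  rw [← ENNReal.ofReal_prod_of_nonneg hnn, prod_cfun t]

lemma vol_interior_img {n : ℕ} {t : ℝ} (ht : 0 < t) :
    volume (interior (dil n t '' Qcell n)) = ENNReal.ofReal (Vol n t) := by
  have hnn : ∀ i ∈ Finset.univ, (0:ℝ) ≤ cfun n t i - -(cfun n t i) := by
    intro i _; have := cfun_pos ht i; linarith
  rw [interior_img ht, volume_pi_pi]
  simp only [Real.volume_Ioo]
  rw [← ENNReal.ofReal_prod_of_nonneg hnn, prod_cfun t]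

lemma interior_mono_scale {n : ℕ} {s t : ℝ} (hs : 0 < s) (hst : s ≤ t) :
    interior (dil n s '' Qcell n) ⊆ interior (dil n t '' Qcell n) := by
  rw [interior_img hs, interior_img (lt_of_lt_of_le hs hst)]
  refine Set.pi_mono fun i _ => Set.Ioo_subset_Ioo ?_ ?_
  · exact neg_le_neg (cfun_mono hs hst i)
  · exact cfun_mono hs hst i

/-- `lin n q` as a continuous linear map. -/
def linCLM (n : ℕ) (q : EuclideanSpace ℝ (Fin (2*n))) : (Pt n) →L[ℝ] ℝ :=
  ∑ i : Fin (2*n), q i •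
    (ContinuousLinearMap.proj (R := ℝ) (φ := fun _ : Fin (2*n+1) => ℝ)
      (⟨(i:ℕ), by have := i.isLt; omega⟩ : Fin (2*n+1)))

lemma linCLM_apply (n : ℕ) (q : EuclideanSpace ℝ (Fin (2*n))) (x : Pt n) :
    linCLM n q x = lin n q x := by
  simp [linCLM, lin, ContinuousLinearMap.sum_apply, ContinuousLinearMap.proj_apply,
    smul_eq_mul]

lemma linCLM_single (n : ℕ) (q : EuclideanSpace ℝ (Fin (2*n))) (j : Fin (2*n+1)) :
    linCLM n q (Pi.single j 1)
      = if h : (j:ℕ) < 2*n then q ⟨(j:ℕ), h⟩ else 0 := by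
  rw [linCLM_apply]
  unfold lin
  split
  · rename_i h
    rw [Finset.sum_eq_single (⟨(j:ℕ), h⟩ : Fin (2*n))]
    · have : (⟨(j:ℕ), by omega⟩ : Fin (2*n+1)) = j := by ext; rfl
      rw [this, Pi.single_eq_same, mul_one]
    · intro b _ hb
      have hne : (⟨(b:ℕ), by have := b.isLt; omega⟩ : Fin (2*n+1)) ≠ j := by
        intro he
        have hv : (b:ℕ) = (j:ℕ) := congrArg Fin.val he
        exact hb (Fin.ext hv)
      rw [Pi.single_eq_of_ne hne, mul_zero]
    · intro h; exact absurd (Finset.mem_univ _) h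
  · rename_i h
    apply Finset.sum_eq_zero
    intro b _
    have hne : (⟨(b:ℕ), by have := b.isLt; omega⟩ : Fin (2*n+1)) ≠ j := by
      intro he
      have := congrArg Fin.val he
      simp at this
      omega
    rw [Pi.single_eq_of_ne hne, mul_zero]

lemma hgrad_of_locally_lin {n : ℕ} (q : EuclideanSpace ℝ (Fin (2*n)))
    {u : Pt n → ℝ} {x : Pt n} (hu : u =ᶠ[nhds x] fun y => lin n q y) :
    hgrad n u x = q := by
  have hlin : (fun y => lin n q y) = ⇑(linCLM n q) := by
    funext y; exact (linCLM_apply n q y).symm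
  have hf : fderiv ℝ u x = linCLM n q := by
    rw [Filter.EventuallyEq.fderiv_eq hu, hlin, ContinuousLinearMap.fderiv]
  have hmain : ∀ i : Fin (2*n), XD n i u x = q i := by
    intro i
    have h1 : fderiv ℝ u x (Pi.single (⟨(i:ℕ), by have := i.isLt; omega⟩ : Fin (2*n+1)) 1)
        = q i := by
      rw [hf, linCLM_single]
      rw [dif_pos i.isLt]
    have h2 : fderiv ℝ u x (Pi.single (⟨2*n, by omega⟩ : Fin (2*n+1)) 1) = 0 := by
      rw [hf, linCLM_single]
      rw [dif_neg (by simp)]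
    unfold XD
    split <;> rw [h1, h2] <;> ring
  refine PiLp.ext fun i => ?_
  exact hmain i

section core

variable {n : ℕ} {f : Pt n → EuclideanSpace ℝ (Fin (2*n)) → ℝ}
  {C₁ C₂ α : ℝ} {q : EuclideanSpace ℝ (Fin (2*n))}

/-- The base competitor `l_q` itself. -/
lemma adm_lin (A : Set (Pt n)) :
    adm n A q (fun x => lin n q x + (fun _ : Pt n => (0:ℝ)) x) := by
  refine ⟨fun _ => 0, contDiff_const, ?_, ?_, rfl⟩
  · rw [HasCompactSupport]
    have : tsupport (fun _ : Pt n => (0:ℝ)) = ∅ := by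
      simp [tsupport, Function.support]
    rw [this]; exact isCompact_empty
  · have : tsupport (fun _ : Pt n => (0:ℝ)) = ∅ := by
      simp [tsupport, Function.support]
    rw [this]; exact Set.empty_subset _

lemma hgrad_lin (x : Pt n) :
    hgrad n (fun x => lin n q x + (fun _ : Pt n => (0:ℝ)) x) x = q := by
  apply hgrad_of_locally_lin
  filter_upwards with y
  simp

lemma mu_set_nonempty (A : Set (Pt n)) :
    Set.Nonempty {r | ∃ u, adm n A q u ∧ r = ∫ x in A, f x (hgrad n u x)} :=
  ⟨_, _, adm_lin A, rfl⟩

lemma mu_set_bddBelow (hC₁ : 0 < C₁)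
    (hgrowth : ∀ x p, C₁ * ‖p‖ ^ α ≤ f x p ∧ f x p ≤ C₂ * (‖p‖ ^ α + 1))
    {A : Set (Pt n)} (hA : MeasurableSet A) :
    (0:ℝ) ∈ lowerBounds {r | ∃ u, adm n A q u ∧ r = ∫ x in A, f x (hgrad n u x)} := by
  rintro r ⟨u, -, rfl⟩
  refine setIntegral_nonneg hA fun x _ => ?_
  refine le_trans ?_ (hgrowth x _).1
  positivity

lemma mu_nonneg (hC₁ : 0 < C₁)
    (hgrowth : ∀ x p, C₁ * ‖p‖ ^ α ≤ f x p ∧ f x p ≤ C₂ * (‖p‖ ^ α + 1))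
    {A : Set (Pt n)} (hA : MeasurableSet A) : 0 ≤ mu n f A q :=
  le_csInf (mu_set_nonempty A) fun _ hr => mu_set_bddBelow hC₁ hgrowth hA hr

lemma integrable_fq (hC₁ : 0 < C₁)
    (hmeas : ∀ p, Measurable fun x => f x p)
    (hgrowth : ∀ x p, C₁ * ‖p‖ ^ α ≤ f x p ∧ f x p ≤ C₂ * (‖p‖ ^ α + 1))
    {A : Set (Pt n)} (hA : volume A ≠ ⊤) :
    IntegrableOn (fun x => f x q) A := by
  refine Integrable.mono' (g := fun _ => C₂ * (‖q‖ ^ α + 1))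
    (integrableOn_const hA)
    ((hmeas q).aestronglyMeasurable) ?_
  filter_upwards with x
  rw [Real.norm_eq_abs, abs_of_nonneg (le_trans (by positivity) (hgrowth x q).1)]
  exact (hgrowth x q).2

lemma setIntegral_fq_le (hC₁ : 0 < C₁)
    (hmeas : ∀ p, Measurable fun x => f x p)
    (hgrowth : ∀ x p, C₁ * ‖p‖ ^ α ≤ f x p ∧ f x p ≤ C₂ * (‖p‖ ^ α + 1))
    {A : Set (Pt n)} (hA : MeasurableSet A) (hAfin : volume A ≠ ⊤) :
    ∫ x in A, f x q ≤ C₂ * (‖q‖ ^ α + 1) * (volume A).toReal := by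
  have h1 : ∫ x in A, f x q ≤ ∫ _x in A, C₂ * (‖q‖ ^ α + 1) := by
    refine setIntegral_mono_on (integrable_fq hC₁ hmeas hgrowth hAfin)
      (integrableOn_const hAfin) hA fun x _ => (hgrowth x q).2
  rw [setIntegral_const, smul_eq_mul, measureReal_def] at h1
  linarith [h1]

lemma mu_le (hC₁ : 0 < C₁)
    (hmeas : ∀ p, Measurable fun x => f x p)
    (hgrowth : ∀ x p, C₁ * ‖p‖ ^ α ≤ f x p ∧ f x p ≤ C₂ * (‖p‖ ^ α + 1))
    {A : Set (Pt n)} (hA : MeasurableSet A) (hAfin : volume A ≠ ⊤) :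
    mu n f A q ≤ C₂ * (‖q‖ ^ α + 1) * (volume A).toReal := by
  have hmem : (∫ x in A, f x q)
      ∈ {r | ∃ u, adm n A q u ∧ r = ∫ x in A, f x (hgrad n u x)} := by
    refine ⟨_, adm_lin A, ?_⟩
    simp only [hgrad_lin]
  exact le_trans (csInf_le ⟨0, mu_set_bddBelow hC₁ hgrowth hA⟩ hmem)
    (setIntegral_fq_le hC₁ hmeas hgrowth hA hAfin)

lemma hgrad_eq_q_off {A : Set (Pt n)} {u v : Pt n → ℝ}
    (hvs : tsupport v ⊆ A) (hueq : u = fun x => lin n q x + v x)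
    {x : Pt n} (hx : x ∉ A) : hgrad n u x = q := by
  have hxns : x ∉ tsupport v := fun h => hx (hvs h)
  apply hgrad_of_locally_lin
  have hmem : (tsupport v)ᶜ ∈ nhds x := (isClosed_tsupport v).isOpen_compl.mem_nhds hxns
  filter_upwards [hmem] with y hy
  rw [hueq]
  simp [image_eq_zero_of_notMem_tsupport hy]

lemma mu_mono (hC₁ : 0 < C₁) (hC₂ : 0 < C₂)
    (hmeas : ∀ p, Measurable fun x => f x p)
    (hgrowth : ∀ x p, C₁ * ‖p‖ ^ α ≤ f x p ∧ f x p ≤ C₂ * (‖p‖ ^ α + 1))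
    {A B : Set (Pt n)} (hA : MeasurableSet A) (hB : MeasurableSet B)
    (hAB : A ⊆ B) (hBfin : volume B ≠ ⊤) :
    mu n f B q ≤ mu n f A q + C₂ * (‖q‖ ^ α + 1) * (volume (B \ A)).toReal := by
  have hKnn : 0 ≤ C₂ * (‖q‖ ^ α + 1) * (volume (B \ A)).toReal := by
    refine mul_nonneg (mul_nonneg hC₂.le ?_) ENNReal.toReal_nonneg
    positivity
  have hdm : MeasurableSet (B \ A) := hB.diff hA
  have hdfin : volume (B \ A) ≠ ⊤ :=
    (lt_of_le_of_lt (measure_mono Set.diff_subset) hBfin.lt_top).ne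
  have key : ∀ r ∈ {r | ∃ u, adm n A q u ∧ r = ∫ x in A, f x (hgrad n u x)},
      mu n f B q ≤ r + C₂ * (‖q‖ ^ α + 1) * (volume (B \ A)).toReal := by
    rintro r ⟨u, ⟨v, hv, hvc, hvs, hueq⟩, rfl⟩
    have huB : adm n B q u := ⟨v, hv, hvc, hvs.trans hAB, hueq⟩
    have h1 : mu n f B q ≤ ∫ x in B, f x (hgrad n u x) :=
      csInf_le ⟨0, mu_set_bddBelow hC₁ hgrowth hB⟩ ⟨u, huB, rfl⟩
    have hgq : ∀ x ∈ B \ A, hgrad n u x = q := fun x hx =>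
      hgrad_eq_q_off hvs hueq hx.2
    by_cases hi : IntegrableOn (fun x => f x (hgrad n u x)) A volume
    · have hiD : IntegrableOn (fun x => f x (hgrad n u x)) (B \ A) volume := by
        refine (integrable_fq (q := q) hC₁ hmeas hgrowth hdfin).congr_fun ?_ hdm
        intro x hx
        show f x q = f x (hgrad n u x)
        rw [hgq x hx]
      have hunion : A ∪ (B \ A) = B := Set.union_diff_cancel hAB
      have hsplit : ∫ x in B, f x (hgrad n u x)
          = (∫ x in A, f x (hgrad n u x)) + ∫ x in B \ A, f x (hgrad n u x) := by
        have h0 := setIntegral_union (f := fun x => f x (hgrad n u x)) (μ := volume)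
          Set.disjoint_sdiff_right hdm hi hiD
        rw [hunion] at h0
        exact h0
      have hDeq : ∫ x in B \ A, f x (hgrad n u x) = ∫ x in B \ A, f x q :=
        setIntegral_congr_fun hdm fun x hx => by rw [hgq x hx]
      have hDb : ∫ x in B \ A, f x q ≤ C₂ * (‖q‖ ^ α + 1) * (volume (B \ A)).toReal :=
        setIntegral_fq_le hC₁ hmeas hgrowth hdm hdfin
      linarith
    · have hr0 : ∫ x in A, f x (hgrad n u x) = 0 := integral_undef hi
      have hiB : ¬ IntegrableOn (fun x => f x (hgrad n u x)) B volume := fun h =>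
        hi (h.mono_set hAB)
      have hB0 : ∫ x in B, f x (hgrad n u x) = 0 := integral_undef hiB
      rw [hB0] at h1
      rw [hr0]
      linarith
  have h2 : mu n f B q - C₂ * (‖q‖ ^ α + 1) * (volume (B \ A)).toReal ≤ mu n f A q :=
    le_csInf (mu_set_nonempty A) fun r hr => by linarith [key r hr]
  linarith

end core

section assemble

variable {n : ℕ} {f : Pt n → EuclideanSpace ℝ (Fin (2*n)) → ℝ}
  {C₁ C₂ α : ℝ} {q : EuclideanSpace ℝ (Fin (2*n))}

lemma ecell_eq {t : ℝ} (ht : 0 < t) :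
    ecell n f q t = mu n f (interior (dil n t '' Qcell n)) q / Vol n t := by
  rw [ecell, vol_img ht, ENNReal.toReal_ofReal (Vol_pos ht).le]

lemma M_mono (hC₁ : 0 < C₁) (hC₂ : 0 < C₂)
    (hmeas : ∀ p, Measurable fun x => f x p)
    (hgrowth : ∀ x p, C₁ * ‖p‖ ^ α ≤ f x p ∧ f x p ≤ C₂ * (‖p‖ ^ α + 1))
    {s t : ℝ} (hs : 0 < s) (hst : s ≤ t) :
    mu n f (interior (dil n t '' Qcell n)) q
      ≤ mu n f (interior (dil n s '' Qcell n)) q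
        + C₂ * (‖q‖ ^ α + 1) * (Vol n t - Vol n s) := by
  have ht : 0 < t := lt_of_lt_of_le hs hst
  have hA : MeasurableSet (interior (dil n s '' Qcell n)) := isOpen_interior.measurableSet
  have hB : MeasurableSet (interior (dil n t '' Qcell n)) := isOpen_interior.measurableSet
  have hvA := vol_interior_img (n := n) hs
  have hvB := vol_interior_img (n := n) ht
  have hsub := interior_mono_scale (n := n) hs hst
  have hBfin : volume (interior (dil n t '' Qcell n)) ≠ ⊤ := by
    rw [hvB]; exact ENNReal.ofReal_ne_top
  have hd : volume (interior (dil n t '' Qcell n) \ interior (dil n s '' Qcell n))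
      = ENNReal.ofReal (Vol n t - Vol n s) := by
    rw [measure_diff hsub hA.nullMeasurableSet (by rw [hvA]; exact ENNReal.ofReal_ne_top),
      hvA, hvB, ← ENNReal.ofReal_sub _ (Vol_pos hs).le]
  have h := mu_mono (q := q) hC₁ hC₂ hmeas hgrowth hA hB hsub hBfin
  rw [hd, ENNReal.toReal_ofReal (by linarith [Vol_mono (n := n) hs hst])] at h
  exact h

lemma ecell_upper (hC₁ : 0 < C₁) (hC₂ : 0 < C₂)
    (hmeas : ∀ p, Measurable fun x => f x p)
    (hgrowth : ∀ x p, C₁ * ‖p‖ ^ α ≤ f x p ∧ f x p ≤ C₂ * (‖p‖ ^ α + 1))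
    {s t : ℝ} (hs : 0 < s) (hst : s ≤ t) (hts : t ≤ s + 1) :
    ecell n f q t ≤ ecell n f q s
      + C₂ * (‖q‖ ^ α + 1) * (1 - Vol n s / Vol n (s+1)) := by
  have ht : 0 < t := lt_of_lt_of_le hs hst
  set K := C₂ * (‖q‖ ^ α + 1) with hKdef
  have hK : 0 ≤ K := by
    refine mul_nonneg hC₂.le ?_
    positivity
  set Ms := mu n f (interior (dil n s '' Qcell n)) q with hMs
  set Mt := mu n f (interior (dil n t '' Qcell n)) q with hMt
  have hMs0 : 0 ≤ Ms := mu_nonneg hC₁ hgrowth isOpen_interior.measurableSet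
  have h1 : Mt ≤ Ms + K * (Vol n t - Vol n s) := M_mono hC₁ hC₂ hmeas hgrowth hs hst
  have hVs := Vol_pos (n := n) hs
  have hVt := Vol_pos (n := n) ht
  have hVs1 := Vol_pos (n := n) (by linarith : (0:ℝ) < s + 1)
  have hVst := Vol_mono (n := n) hs hst
  have hVt1 := Vol_mono (n := n) ht hts
  rw [ecell_eq ht, ecell_eq hs]
  have d1 : Mt / Vol n t ≤ Ms / Vol n t + K * (1 - Vol n s / Vol n t) := by
    rw [div_le_iff₀ hVt] at *
    have expand : (Ms / Vol n t + K * (1 - Vol n s / Vol n t)) * Vol n t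
        = Ms + K * (Vol n t - Vol n s) := by
      field_simp
    rw [expand]
    exact h1
  have d2 : Ms / Vol n t ≤ Ms / Vol n s := by gcongr
  have d3 : Vol n s / Vol n (s+1) ≤ Vol n s / Vol n t := by gcongr
  have d4 : K * (1 - Vol n s / Vol n t) ≤ K * (1 - Vol n s / Vol n (s+1)) := by
    apply mul_le_mul_of_nonneg_left _ hK
    linarith
  linarith

lemma ecell_lower (hC₁ : 0 < C₁) (hC₂ : 0 < C₂)
    (hmeas : ∀ p, Measurable fun x => f x p)
    (hgrowth : ∀ x p, C₁ * ‖p‖ ^ α ≤ f x p ∧ f x p ≤ C₂ * (‖p‖ ^ α + 1))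
    {s t : ℝ} (hs : 0 < s) (hst : s ≤ t) (hts : t ≤ s + 1) :
    ecell n f q (s+1)
      - C₂ * (‖q‖ ^ α + 1) * (Vol n (s+1) / Vol n s - 1) ≤ ecell n f q t := by
  have ht : 0 < t := lt_of_lt_of_le hs hst
  have hs1 : (0:ℝ) < s + 1 := by linarith
  set K := C₂ * (‖q‖ ^ α + 1) with hKdef
  have hK : 0 ≤ K := by
    refine mul_nonneg hC₂.le ?_
    positivity
  set Mt := mu n f (interior (dil n t '' Qcell n)) q with hMt
  set M1 := mu n f (interior (dil n (s+1) '' Qcell n)) q with hM1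
  have hM10 : 0 ≤ M1 := mu_nonneg hC₁ hgrowth isOpen_interior.measurableSet
  have h1 : M1 ≤ Mt + K * (Vol n (s+1) - Vol n t) := M_mono hC₁ hC₂ hmeas hgrowth ht hts
  have hVs := Vol_pos (n := n) hs
  have hVt := Vol_pos (n := n) ht
  have hVs1 := Vol_pos (n := n) hs1
  have hVst := Vol_mono (n := n) hs hst
  have hVt1 := Vol_mono (n := n) ht hts
  rw [ecell_eq ht, ecell_eq hs1]
  have d1 : M1 / Vol n t - K * (Vol n (s+1) / Vol n t - 1) ≤ Mt / Vol n t := by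
    rw [sub_le_iff_le_add, div_le_iff₀ hVt]
    have expand : (Mt / Vol n t + K * (Vol n (s+1) / Vol n t - 1)) * Vol n t
        = Mt + K * (Vol n (s+1) - Vol n t) := by
      field_simp
    rw [expand]
    exact h1
  have d2 : M1 / Vol n (s+1) ≤ M1 / Vol n t := by gcongr
  have d3 : Vol n (s+1) / Vol n t ≤ Vol n (s+1) / Vol n s := by gcongr
  have d4 : K * (Vol n (s+1) / Vol n t - 1) ≤ K * (Vol n (s+1) / Vol n s - 1) := by
    apply mul_le_mul_of_nonneg_left _ hK
    linarith
  linarith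

end assemble

lemma Vol_ratio (n : ℕ) (a b : ℝ) : Vol n a / Vol n b = (a/b)^(2*n+2) := by
  unfold Vol
  rw [mul_div_mul_left _ _ (by positivity : ((2:ℝ)^(2*n+1)) ≠ 0), div_pow]

lemma lim_ratio1 (n : ℕ) :
    Tendsto (fun h : ℕ => ((h:ℝ)/((h:ℝ)+1))^(2*n+2)) atTop (𝓝 1) := by
  have hb : Tendsto (fun h : ℕ => (h:ℝ)/((h:ℝ)+1)) atTop (𝓝 1) :=
    tendsto_natCast_div_add_atTop (1:ℝ)
  simpa using hb.pow (2*n+2)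

lemma lim_ratio2 (n : ℕ) :
    Tendsto (fun h : ℕ => (((h:ℝ)+1)/(h:ℝ))^(2*n+2)) atTop (𝓝 1) := by
  have hb : Tendsto (fun h : ℕ => ((h:ℝ)+1)/(h:ℝ)) atTop (𝓝 1) := by
    have h0 : Tendsto (fun h : ℕ => 1 + 1/(h:ℝ)) atTop (𝓝 (1+0)) :=
      tendsto_const_nhds.add tendsto_one_div_atTop_nhds_zero_nat
    rw [add_zero] at h0
    refine h0.congr' ?_
    filter_upwards [Filter.eventually_ge_atTop 1] with h hh
    have h0' : ((h:ℝ)) ≠ 0 := Nat.cast_ne_zero.2 (by omega)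
    rw [add_div, div_self h0']
  simpa using hb.pow (2*n+2)

/-- reduction to integer scales: if the normalised minimal energies
`e_t = μ_q(δ_t Q)/|δ_t Q|` converge along natural numbers, they converge along every
sequence of positive reals tending to infinity, with the same limit. -/
theorem stmt_14 (n : ℕ) (hn : 1 ≤ n)
    (f : Pt n → EuclideanSpace ℝ (Fin (2*n)) → ℝ)
    (hmeas : ∀ p, Measurable fun x => f x p)
    (C₁ C₂ α : ℝ) (hC₁ : 0 < C₁) (hC₂ : 0 < C₂) (hα : 1 < α)
    (hgrowth : ∀ x p, C₁ * ‖p‖ ^ α ≤ f x p ∧ f x p ≤ C₂ * (‖p‖ ^ α + 1))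
    (q : EuclideanSpace ℝ (Fin (2*n))) (C : ℝ)
    (hint : Filter.Tendsto (fun h : ℕ => ecell n f q h) Filter.atTop (nhds C))
    (t : ℕ → ℝ) (ht : ∀ k, 0 < t k) (htop : Filter.Tendsto t Filter.atTop Filter.atTop) :
    Filter.Tendsto (fun k => ecell n f q (t k)) Filter.atTop (nhds C) := by
  set K := C₂ * (‖q‖ ^ α + 1) with hKdef
  have hfl : Tendsto (fun k => ⌊t k⌋₊) atTop atTop :=
    tendsto_nat_floor_atTop.comp htop
  -- the upper comparison sequence
  have hupG : Tendsto
      (fun h : ℕ => ecell n f q h + K * (1 - Vol n h / Vol n ((h:ℝ)+1))) atTop (𝓝 C) := by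
    have h1 : Tendsto (fun h : ℕ => K * (1 - ((h:ℝ)/((h:ℝ)+1))^(2*n+2))) atTop
        (𝓝 (K * (1 - 1))) := (tendsto_const_nhds.sub (lim_ratio1 n)).const_mul K
    have h2 := hint.add h1
    simp only [sub_self, mul_zero, add_zero] at h2
    refine h2.congr fun h => ?_
    rw [Vol_ratio]
  have hloG : Tendsto
      (fun h : ℕ => ecell n f q ((h:ℝ)+1) - K * (Vol n ((h:ℝ)+1) / Vol n h - 1)) atTop
      (𝓝 C) := by
    have hshift : Tendsto (fun h : ℕ => ecell n f q ((h:ℝ)+1)) atTop (𝓝 C) := by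
      have := hint.comp (tendsto_add_atTop_nat 1)
      refine this.congr fun h => ?_
      simp only [Function.comp]
      push_cast
      rfl
    have h1 : Tendsto (fun h : ℕ => K * ((((h:ℝ)+1)/(h:ℝ))^(2*n+2) - 1)) atTop
        (𝓝 (K * (1 - 1))) := ((lim_ratio2 n).sub tendsto_const_nhds).const_mul K
    have h2 := hshift.sub h1
    simp only [sub_self, mul_zero, sub_zero] at h2
    refine h2.congr fun h => ?_
    rw [Vol_ratio]
  have hev : ∀ᶠ k in atTop, 1 ≤ t k := htop.eventually_ge_atTop 1
  refine tendsto_of_tendsto_of_tendsto_of_le_of_le' (hloG.comp hfl) (hupG.comp hfl) ?_ ?_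
  · filter_upwards [hev] with k hk
    have h1f : 1 ≤ ⌊t k⌋₊ := Nat.le_floor (by exact_mod_cast hk)
    have hs : (0:ℝ) < (⌊t k⌋₊ : ℝ) := by exact_mod_cast Nat.lt_of_lt_of_le Nat.zero_lt_one h1f
    have hst : ((⌊t k⌋₊ : ℝ)) ≤ t k := Nat.floor_le (ht k).le
    have hts : t k ≤ (⌊t k⌋₊ : ℝ) + 1 := (Nat.lt_floor_add_one (t k)).le
    exact ecell_lower hC₁ hC₂ hmeas hgrowth hs hst hts
  · filter_upwards [hev] with k hk
    have h1f : 1 ≤ ⌊t k⌋₊ := Nat.le_floor (by exact_mod_cast hk)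
    have hs : (0:ℝ) < (⌊t k⌋₊ : ℝ) := by exact_mod_cast Nat.lt_of_lt_of_le Nat.zero_lt_one h1f
    have hst : ((⌊t k⌋₊ : ℝ)) ≤ t k := Nat.floor_le (ht k).le
    have hts : t k ≤ (⌊t k⌋₊ : ℝ) + 1 := (Nat.lt_floor_add_one (t k)).le
    exact ecell_upper hC₁ hC₂ hmeas hgrowth hs hst hts

end
end
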